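/- arXiv:1205.0130 — 7 statements merged into one kernel-verified Lean document; each statement's English description precedes it below -/
import Mathlib

section
/- If P is a collected n-regular n-compressed (0,1)-matrix with m rows and w columns (n, m, w positive integers), then w ≥ ⌈m/n⌉ · n. -/
/-- Entries of the (0,1)-matrix (represented by its set of ones, as a Boolean
function on 1-based indices) lie within the index range `[1,m] × [1,w]`. -/
def Matrix01 (P : ℕ → ℕ → Bool) (m w : ℕ) : Prop :=
  ∀ i j, P i j = true → 1 ≤ i ∧ i ≤ m ∧ 1 ≤ j ∧ j ≤ w

/-- `eps P i` = the index of the first one in row `i` (the quantity `ε(i,P)`). -/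
noncomputable def eps (P : ℕ → ℕ → Bool) (i : ℕ) : ℕ :=
  sInf {j | P i j = true}

/-- Every row in range is collected: its ones form a nonempty set of
consecutive indices. -/
def RowsCollected (P : ℕ → ℕ → Bool) (m : ℕ) : Prop :=
  ∀ i, 1 ≤ i → i ≤ m →
    (∃ j, P i j = true) ∧
    ∀ p q r, P i p = true → P i q = true → p ≤ r → r ≤ q → P i r = true

/-- Every column in range is collected. -/
def ColsCollected (P : ℕ → ℕ → Bool) (w : ℕ) : Prop :=
  ∀ j, 1 ≤ j → j ≤ w →
    (∃ i, P i j = true) ∧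
    ∀ p q r, P p j = true → P q j = true → p ≤ r → r ≤ q → P r j = true

/-- `P` is a collected matrix with `m` rows and `w` columns. -/
def CollectedMatrix (P : ℕ → ℕ → Bool) (m w : ℕ) : Prop :=
  Matrix01 P m w ∧ RowsCollected P m ∧ ColsCollected P w ∧
  P 1 1 = true ∧ P m w = true ∧
  ∀ i i', 1 ≤ i → i ≤ i' → i' ≤ m → eps P i ≤ eps P i'

/-- `P` is `n`-regular: every row has exactly `n` ones. -/
def RowRegular (P : ℕ → ℕ → Bool) (m w n : ℕ) : Prop :=
  ∀ i, 1 ≤ i → i ≤ m → ((Finset.Icc 1 w).filter (fun j => P i j = true)).card = n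

/-- `P` is `c`-compressed: every column has at most `c` ones. -/
def ColCompressed (P : ℕ → ℕ → Bool) (m w c : ℕ) : Prop :=
  ∀ j, 1 ≤ j → j ≤ w → ((Finset.Icc 1 m).filter (fun i => P i j = true)).card ≤ c

lemma row_ones {P : ℕ → ℕ → Bool} {m w n : ℕ} (hP : Matrix01 P m w)
    (hrow : RowsCollected P m) (hreg : RowRegular P m w n)
    {i : ℕ} (h1 : 1 ≤ i) (h2 : i ≤ m) :
    (Finset.Icc 1 w).filter (fun j => P i j = true)
      = Finset.Icc (eps P i) (eps P i + n - 1) := by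
  obtain ⟨hne, hconv⟩ := hrow i h1 h2
  have hmemeps : P i (eps P i) = true := Nat.sInf_mem hne
  set S := (Finset.Icc 1 w).filter (fun j => P i j = true) with hS
  have hmemS : ∀ j, j ∈ S ↔ P i j = true := by
    intro j
    constructor
    · intro h; exact (Finset.mem_filter.mp h).2
    · intro h
      obtain ⟨_, _, hj1, hjw⟩ := hP i j h
      simp [hS, Finset.mem_filter, Finset.mem_Icc, hj1, hjw, h]
  have hSne : S.Nonempty := ⟨eps P i, (hmemS _).mpr hmemeps⟩
  have heq : S = Finset.Icc (eps P i) (S.max' hSne) := by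
    apply Finset.ext; intro j
    simp only [Finset.mem_Icc]
    constructor
    · intro hj
      exact ⟨Nat.sInf_le ((hmemS j).mp hj), Finset.le_max' S j hj⟩
    · rintro ⟨hj1, hj2⟩
      exact (hmemS j).mpr (hconv (eps P i) (S.max' hSne) j hmemeps
        ((hmemS _).mp (S.max'_mem hSne)) hj1 hj2)
  have hcard : S.card = n := hreg i h1 h2
  have hcard2 : S.max' hSne + 1 - eps P i = n := by
    rw [heq] at hcard; rwa [Nat.card_Icc] at hcard
  have hle : eps P i ≤ S.max' hSne := Finset.le_max' S _ ((hmemS _).mpr hmemeps)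
  have hmax : S.max' hSne = eps P i + n - 1 := by omega
  rw [heq, hmax]

/-- If `P` is a collected `n`-regular `n`-compressed (0,1)-matrix
with `m` rows and `w` columns (`n, m, w` positive), then `w ≥ ⌈m/n⌉ · n`. -/
theorem stmt0 (P : ℕ → ℕ → Bool) (m w n : ℕ)
    (hm : 0 < m) (hn : 0 < n) (hw : 0 < w)
    (hcol : CollectedMatrix P m w)
    (hreg : RowRegular P m w n)
    (hcomp : ColCompressed P m w n) :
    w ≥ ((m + n - 1) / n) * n := by
  obtain ⟨hP, hrow, hcols, h11, hmw, hmono⟩ := hcol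
  -- basic facts about rows
  have hmem : ∀ i j, 1 ≤ i → i ≤ m → (P i j = true ↔
      (eps P i ≤ j ∧ j ≤ eps P i + n - 1)) := by
    intro i j h1 h2
    have hR := row_ones hP hrow hreg h1 h2
    constructor
    · intro h
      obtain ⟨_, _, hj1, hjw⟩ := hP i j h
      have : j ∈ (Finset.Icc 1 w).filter (fun j => P i j = true) := by
        simp [Finset.mem_filter, Finset.mem_Icc, hj1, hjw, h]
      rw [hR] at this
      exact Finset.mem_Icc.mp this
    · rintro ⟨ha, hb⟩
      have : j ∈ Finset.Icc (eps P i) (eps P i + n - 1) := Finset.mem_Icc.mpr ⟨ha, hb⟩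
      rw [← hR] at this
      exact (Finset.mem_filter.mp this).2
  have heps_pos : ∀ i, 1 ≤ i → i ≤ m → 1 ≤ eps P i ∧ eps P i + n - 1 ≤ w := by
    intro i h1 h2
    have hend : P i (eps P i + n - 1) = true := by
      rw [hmem i _ h1 h2]; omega
    obtain ⟨_, _, _, hw'⟩ := hP i _ hend
    have hstart : P i (eps P i) = true := Nat.sInf_mem (hrow i h1 h2).1
    obtain ⟨_, _, h1', _⟩ := hP i _ hstart
    exact ⟨h1', hw'⟩
  -- the jump lemma
  have hjump : ∀ i, 1 ≤ i → i + n ≤ m → eps P i + n ≤ eps P (i + n) := by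
    intro i h1 h2
    by_contra hcon
    push_neg at hcon
    set j := eps P (i + n) with hj
    have hin1 : 1 ≤ i + n := by omega
    have hjw : 1 ≤ j ∧ j ≤ w := by
      have hstart : P (i + n) j = true := Nat.sInf_mem (hrow (i+n) hin1 h2).1
      obtain ⟨_, _, a, b⟩ := hP _ _ hstart
      exact ⟨a, b⟩
    have hsub : Finset.Icc i (i + n) ⊆
        (Finset.Icc 1 m).filter (fun k => P k j = true) := by
      intro k hk
      rw [Finset.mem_Icc] at hk
      have hk1 : 1 ≤ k := by omega
      have hkm : k ≤ m := by omega
      have he1 : eps P i ≤ eps P k := hmono i k h1 hk.1 hkm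
      have he2 : eps P k ≤ j := hmono k (i + n) hk1 hk.2 h2
      have : P k j = true := by
        rw [hmem k j hk1 hkm]
        constructor
        · exact he2
        · omega
      simp [Finset.mem_filter, Finset.mem_Icc, hk1, hkm, this]
    have hcard := Finset.card_le_card hsub
    rw [Nat.card_Icc] at hcard
    have := hcomp j hjw.1 hjw.2
    omega
  -- eps P 1 = 1
  have heps1 : eps P 1 = 1 := by
    have hle : eps P 1 ≤ 1 := Nat.sInf_le h11
    have := (heps_pos 1 le_rfl hm).1
    omega
  -- induction
  have hchain : ∀ k, 1 + k * n ≤ m → 1 + k * n ≤ eps P (1 + k * n) := by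
    intro k
    induction k with
    | zero => intro _; simp [heps1]
    | succ k ih =>
      intro hk
      have hk' : 1 + k * n ≤ m := by nlinarith
      have h1 := ih hk'
      have h2 : (1 + k * n) + n ≤ m := by nlinarith
      have := hjump (1 + k * n) (by omega) h2
      have heq : 1 + k * n + n = 1 + (k + 1) * n := by ring
      rw [heq] at this
      omega
  -- conclude
  set q := (m + n - 1) / n with hq
  have hq' : q = (m - 1) / n + 1 := by
    rw [hq]
    have : m + n - 1 = (m - 1) + n := by omega
    rw [this, Nat.add_div_right _ hn]
  have hkn : ((m - 1) / n) * n ≤ m - 1 := Nat.div_mul_le_self _ _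
  set k := (m - 1) / n with hk
  have hi0 : 1 + k * n ≤ m := by omega
  have h1 := hchain k hi0
  have h2 := hmono (1 + k * n) m (by omega) hi0 le_rfl
  have h3 := (heps_pos m hm le_rfl).2
  have : q * n = k * n + n := by rw [hq']; ring
  omega
end

section
/- If P is a collected n-regular n-compressed (0,1)-matrix with m rows and w columns, m > n, and one deletes the first n rows and the first ε(n+1,P)−1 columns, the resulting matrix P' with m−n rows and w−(ε(n+1,P)−1) columns is again a collected n-regular n-compressed matrix. -/
/-!
Since `ε` is nondecreasing, every row below row `n` starts at or after column `ε(n+1)`, so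
deleting the first `ε(n+1) - 1` columns only shifts these rows, and they stay intervals of
length `n`. Columns can only lose ones. The one thing to check is that no remaining column
becomes empty: in an `n`-regular collected matrix row `i` is exactly `[ε(i), ε(i) + n)`, so a
column `c ≥ ε(n+1)` met only by some row `k ≤ n` is also met by row `n + 1`.
-/

def dropRowsCols (P : ℕ → ℕ → Bool) (a b : ℕ) (i j : ℕ) : Bool :=
  if 1 ≤ i ∧ 1 ≤ j then P (i + a) (j + b) else false

lemma Finset.mem_iff_le_and_lt_add_card {S : Finset ℕ} {e : ℕ} (he : IsLeast (S : Set ℕ) e)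
    (hconv : ∀ p q r, p ∈ S → q ∈ S → p ≤ r → r ≤ q → r ∈ S) (x : ℕ) :
    x ∈ S ↔ e ≤ x ∧ x < e + S.card := by
  obtain ⟨M, rfl⟩ : ∃ M, S = Finset.Icc e M := by
    have hne : S.Nonempty := ⟨e, he.1⟩
    refine ⟨S.max' hne, Finset.ext fun y => ?_⟩
    rw [Finset.mem_Icc]
    exact ⟨fun hy => ⟨he.2 hy, S.le_max' y hy⟩,
      fun hy => hconv e _ y he.1 (S.max'_mem hne) hy.1 hy.2⟩
  have heM := (Finset.mem_Icc.1 he.1).2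
  rw [Finset.mem_Icc, Nat.card_Icc]
  omega

section Rows

variable {P : ℕ → ℕ → Bool} {m w n : ℕ}

lemma eps_mem (hrc : RowsCollected P m) {i : ℕ} (h1 : 1 ≤ i) (h2 : i ≤ m) :
    P i (eps P i) = true :=
  Nat.sInf_mem (hrc i h1 h2).1

lemma eps_le_of_apply {i j : ℕ} (h : P i j = true) : eps P i ≤ j :=
  Nat.sInf_le h

lemma apply_eq_true_iff_of_rowRegular (hM : Matrix01 P m w) (hrc : RowsCollected P m)
    (hreg : RowRegular P m w n) {i : ℕ} (h1 : 1 ≤ i) (h2 : i ≤ m) (c : ℕ) :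
    P i c = true ↔ eps P i ≤ c ∧ c < eps P i + n := by
  have hrow : ∀ j, P i j = true ↔ j ∈ (Finset.Icc 1 w).filter (fun j => P i j = true) :=
    fun j => ⟨fun h => Finset.mem_filter.2
      ⟨Finset.mem_Icc.2 ⟨(hM i j h).2.2.1, (hM i j h).2.2.2⟩, h⟩,
      fun h => (Finset.mem_filter.1 h).2⟩
  rw [hrow, Finset.mem_iff_le_and_lt_add_card, hreg i h1 h2]
  · exact ⟨(hrow _).1 (eps_mem hrc h1 h2), fun j hj => eps_le_of_apply ((hrow j).2 hj)⟩
  · intro p q r hp hq hpr hrq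
    rw [← hrow] at hp hq ⊢
    exact (hrc i h1 h2).2 p q r hp hq hpr hrq

lemma exists_apply_eq_true_of_eps_le (hcol : CollectedMatrix P m w)
    (hreg : RowRegular P m w n) {r c : ℕ} (hr1 : 1 ≤ r) (hrm : r ≤ m) (hc : eps P r ≤ c)
    (hc1 : 1 ≤ c) (hcw : c ≤ w) :
    ∃ i, r ≤ i ∧ P i c = true := by
  obtain ⟨hM, hrows, hcols, -, -, hmon⟩ := hcol
  obtain ⟨k, hk⟩ := (hcols c hc1 hcw).1
  obtain ⟨hk1, hkm, -, -⟩ := hM k c hk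
  rcases le_or_gt r k with hrk | hkr
  · exact ⟨k, hrk, hk⟩
  · -- `ε(k) ≤ ε(r) ≤ c < ε(k) + n ≤ ε(r) + n`, so row `r` itself meets column `c`
    refine ⟨r, le_rfl, (apply_eq_true_iff_of_rowRegular hM hrows hreg hr1 hrm c).2 ⟨hc, ?_⟩⟩
    have hkc := (apply_eq_true_iff_of_rowRegular hM hrows hreg hk1 hkm c).1 hk
    have := hmon k r hk1 hkr.le hrm
    omega

end Rows

section DropRowsCols

variable {P : ℕ → ℕ → Bool} {m w n a b : ℕ}

lemma dropRowsCols_eq_true_iff {i j : ℕ} :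
    dropRowsCols P a b i j = true ↔ 1 ≤ i ∧ 1 ≤ j ∧ P (i + a) (j + b) = true := by
  unfold dropRowsCols
  split_ifs with h
  · simp [h]
  · simp only [false_iff]
    tauto

lemma matrix01_dropRowsCols (hM : Matrix01 P m w) :
    Matrix01 (dropRowsCols P a b) (m - a) (w - b) := by
  intro i j h
  obtain ⟨hi, hj, h⟩ := dropRowsCols_eq_true_iff.1 h
  have := hM _ _ h
  omega

lemma colCompressed_dropRowsCols (hcomp : ColCompressed P m w n) :
    ColCompressed (dropRowsCols P a b) (m - a) (w - b) n := by
  intro j hj1 hjw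
  refine le_trans ?_ (hcomp (j + b) (by omega) (by omega))
  refine Finset.card_le_card_of_injOn (· + a) ?_ (fun x _ y _ h => by simpa using h)
  intro i hi
  simp only [Finset.mem_coe, Finset.mem_filter, Finset.mem_Icc,
    dropRowsCols_eq_true_iff] at hi ⊢
  exact ⟨⟨by omega, by omega⟩, hi.2.2.2⟩

section Row

variable {i : ℕ} (hb : ∀ j, P (i + a) j = true → b < j)
include hb

lemma eps_dropRowsCols (hne : ∃ j, P (i + a) j = true) (hi : 1 ≤ i) :
    eps (dropRowsCols P a b) i = eps P (i + a) - b := by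
  have hmem : P (i + a) (eps P (i + a)) = true := Nat.sInf_mem hne
  have hlt := hb _ hmem
  have hfirst : dropRowsCols P a b i (eps P (i + a) - b) = true :=
    dropRowsCols_eq_true_iff.2 ⟨hi, by omega, by rwa [Nat.sub_add_cancel hlt.le]⟩
  refine le_antisymm (eps_le_of_apply hfirst) (le_csInf ⟨_, hfirst⟩ fun j hj => ?_)
  have := eps_le_of_apply (dropRowsCols_eq_true_iff.1 hj).2.2
  omega

lemma card_filter_dropRowsCols_row (hi : 1 ≤ i) :
    ((Finset.Icc 1 (w - b)).filter fun j => dropRowsCols P a b i j = true).card =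
      ((Finset.Icc 1 w).filter fun j => P (i + a) j = true).card := by
  refine Finset.card_nbij' (· + b) (· - b) ?_ ?_ ?_ ?_
  · intro j hj
    simp only [Finset.mem_coe, Finset.mem_filter, Finset.mem_Icc,
      dropRowsCols_eq_true_iff] at hj ⊢
    exact ⟨⟨by omega, by omega⟩, hj.2.2.2⟩
  · intro j hj
    simp only [Finset.mem_coe, Finset.mem_filter, Finset.mem_Icc,
      dropRowsCols_eq_true_iff] at hj ⊢
    have := hb j hj.2
    refine ⟨⟨by omega, by omega⟩, by omega, by omega, ?_⟩
    rw [Nat.sub_add_cancel this.le]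
    exact hj.2
  · intro j _
    simp
  · intro j hj
    simp only [Finset.mem_coe, Finset.mem_filter] at hj
    exact Nat.sub_add_cancel (hb j hj.2).le

end Row

variable (hb : ∀ i, 1 ≤ i → i + a ≤ m → ∀ j, P (i + a) j = true → b < j)
include hb

lemma rowRegular_dropRowsCols (hreg : RowRegular P m w n) :
    RowRegular (dropRowsCols P a b) (m - a) (w - b) n := by
  intro i hi1 him
  rw [card_filter_dropRowsCols_row (hb i hi1 (by omega)) hi1]
  exact hreg (i + a) (by omega) (by omega)

lemma rowsCollected_dropRowsCols (hrc : RowsCollected P m) :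
    RowsCollected (dropRowsCols P a b) (m - a) := by
  intro i hi1 him
  have hrow := hrc (i + a) (by omega) (by omega)
  have hfirst : P (i + a) (eps P (i + a)) = true := eps_mem hrc (by omega) (by omega)
  have hlt := hb i hi1 (by omega) _ hfirst
  refine ⟨⟨eps P (i + a) - b, dropRowsCols_eq_true_iff.2 ⟨hi1, by omega, ?_⟩⟩, ?_⟩
  · rwa [Nat.sub_add_cancel hlt.le]
  · intro p q r hp hq hpr hrq
    rw [dropRowsCols_eq_true_iff] at hp hq ⊢
    exact ⟨hi1, by omega, hrow.2 _ _ _ hp.2.2 hq.2.2 (by omega) (by omega)⟩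

omit hb in
lemma colsCollected_dropRowsCols (hcc : ColsCollected P w)
    (hcover : ∀ j, 1 ≤ j → j + b ≤ w → ∃ i, a < i ∧ P i (j + b) = true) :
    ColsCollected (dropRowsCols P a b) (w - b) := by
  intro j hj1 hjw
  obtain ⟨i, hai, hi⟩ := hcover j hj1 (by omega)
  refine ⟨⟨i - a, dropRowsCols_eq_true_iff.2
    ⟨by omega, hj1, by rwa [Nat.sub_add_cancel hai.le]⟩⟩, ?_⟩
  intro p q r hp hq hpr hrq
  rw [dropRowsCols_eq_true_iff] at hp hq ⊢
  exact ⟨by omega, hj1,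
    (hcc (j + b) (by omega) (by omega)).2 _ _ _ hp.2.2 hq.2.2 (by omega) (by omega)⟩

lemma collectedMatrix_dropRowsCols (hcol : CollectedMatrix P m w)
    (hcover : ∀ j, 1 ≤ j → j + b ≤ w → ∃ i, a < i ∧ P i (j + b) = true)
    (hcorner : P (a + 1) (b + 1) = true) :
    CollectedMatrix (dropRowsCols P a b) (m - a) (w - b) := by
  obtain ⟨hM, hrc, hcc, -, hmw, hmon⟩ := hcol
  obtain ⟨-, ham, -, hbw⟩ := hM _ _ hcorner
  have heps : ∀ i, 1 ≤ i → i ≤ m - a → eps (dropRowsCols P a b) i = eps P (i + a) - b :=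
    fun i hi1 him =>
      eps_dropRowsCols (hb i hi1 (by omega)) (hrc (i + a) (by omega) (by omega)).1 hi1
  refine ⟨matrix01_dropRowsCols hM, rowsCollected_dropRowsCols hb hrc,
    colsCollected_dropRowsCols hcc hcover, ?_, ?_, ?_⟩
  · rw [dropRowsCols, if_pos ⟨le_rfl, le_rfl⟩, Nat.add_comm 1 a, Nat.add_comm 1 b]
    exact hcorner
  · rw [dropRowsCols, if_pos ⟨by omega, by omega⟩, Nat.sub_add_cancel (by omega),
      Nat.sub_add_cancel (by omega)]
    exact hmw
  · intro i i' hi1 hii' hi'm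
    rw [heps i hi1 (by omega), heps i' (by omega) hi'm]
    exact Nat.sub_le_sub_right (hmon _ _ (by omega) (by omega) (by omega)) b

end DropRowsCols

theorem stmt2_general (P : ℕ → ℕ → Bool) (m w n : ℕ)
    (hmn : n < m)
    (hcol : CollectedMatrix P m w)
    (hreg : RowRegular P m w n)
    (hcomp : ColCompressed P m w n)
    (P' : ℕ → ℕ → Bool)
    (hP' : ∀ i j, P' i j =
      if 1 ≤ i ∧ 1 ≤ j then P (i + n) (j + (eps P (n + 1) - 1)) else false) :
    CollectedMatrix P' (m - n) (w - (eps P (n + 1) - 1)) ∧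
    RowRegular P' (m - n) (w - (eps P (n + 1) - 1)) n ∧
    ColCompressed P' (m - n) (w - (eps P (n + 1) - 1)) n := by
  obtain rfl : P' = dropRowsCols P n (eps P (n + 1) - 1) := funext fun i => funext (hP' i)
  have ⟨hM, hrc, _, _, _, hmon⟩ := hcol
  have hfirst : P (n + 1) (eps P (n + 1)) = true := eps_mem hrc (by omega) hmn
  have heps_pos : 1 ≤ eps P (n + 1) := (hM _ _ hfirst).2.2.1
  have hb : ∀ i, 1 ≤ i → i + n ≤ m →
      ∀ j, P (i + n) j = true → eps P (n + 1) - 1 < j :=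
    fun i hi him j hj => by
      have := hmon (n + 1) (i + n) (by omega) (by omega) him
      have := eps_le_of_apply hj
      omega
  have hcover : ∀ j, 1 ≤ j → j + (eps P (n + 1) - 1) ≤ w →
      ∃ i, n < i ∧ P i (j + (eps P (n + 1) - 1)) = true := fun j hj hjw =>
    exists_apply_eq_true_of_eps_le (r := n + 1) hcol hreg (by omega) hmn (by omega) (by omega)
      hjw
  refine ⟨collectedMatrix_dropRowsCols hb hcol hcover ?_, rowRegular_dropRowsCols hb hreg,
    colCompressed_dropRowsCols hcomp⟩
  rwa [Nat.sub_add_cancel heps_pos]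

/-- Deleting the first `n` rows and the first `ε(n+1,P) - 1`
columns of a collected `n`-regular `n`-compressed matrix `P` (with `m > n`
rows) yields again a collected `n`-regular `n`-compressed matrix, with
`m - n` rows and `w - (ε(n+1,P) - 1)` columns. -/
theorem stmt2 (P : ℕ → ℕ → Bool) (m w n : ℕ)
    (hn : 0 < n) (hw : 0 < w) (hmn : n < m)
    (hcol : CollectedMatrix P m w)
    (hreg : RowRegular P m w n)
    (hcomp : ColCompressed P m w n)
    (P' : ℕ → ℕ → Bool)
    (hP' : ∀ i j, P' i j =
      if 1 ≤ i ∧ 1 ≤ j then P (i + n) (j + (eps P (n + 1) - 1)) else false) :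
    CollectedMatrix P' (m - n) (w - (eps P (n + 1) - 1)) ∧
    RowRegular P' (m - n) (w - (eps P (n + 1) - 1)) n ∧
    ColCompressed P' (m - n) (w - (eps P (n + 1) - 1)) n :=
  stmt2_general P m w n hmn hcol hreg hcomp P' hP'
end

section
/- Let G be a bipartite graph with parts X and Y such that for every edge (x,y) with x ∈ X, y ∈ Y, d(y) ≤ d(x). Then there exists a proper edge Δ(G)-coloring φ of G such that for every x ∈ X, the set of colors on edges incident with x equals {1, 2, ..., d(x)}. -/
/-- A proper edge `t`-coloring of the bipartite graph with parts `α`, `β` and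
edge set `E ⊆ α × β`: colors lie in `{1,…,t}`, all colors are used, and
adjacent edges (sharing an endpoint) get distinct colors. -/
def IsProperEdgeColoring {α β : Type*} (E : Finset (α × β)) (t : ℕ)
    (φ : α × β → ℕ) : Prop :=
  (∀ e ∈ E, φ e ∈ Finset.Icc 1 t) ∧
  (∀ c ∈ Finset.Icc 1 t, ∃ e ∈ E, φ e = c) ∧
  (∀ e ∈ E, ∀ e' ∈ E, e ≠ e' → (e.1 = e'.1 ∨ e.2 = e'.2) → φ e ≠ φ e')

/-- The spectrum of a vertex `x` of the part `α`: the set of colors on edges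
incident with `x`. -/
def spectX {α β : Type*} [DecidableEq α] (E : Finset (α × β))
    (φ : α × β → ℕ) (x : α) : Finset ℕ :=
  (E.filter fun e => e.1 = x).image φ

/-- The spectrum of a vertex `y` of the part `β`. -/
def spectY {α β : Type*} [DecidableEq β] (E : Finset (α × β))
    (φ : α × β → ℕ) (y : β) : Finset ℕ :=
  (E.filter fun e => e.2 = y).image φ

/-- Degree of a vertex of the part `α`. -/
def degX {α β : Type*} [DecidableEq α] (E : Finset (α × β)) (x : α) : ℕ :=
  (E.filter fun e => e.1 = x).card

/-- Degree of a vertex of the part `β`. -/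
def degY {α β : Type*} [DecidableEq β] (E : Finset (α × β)) (y : β) : ℕ :=
  (E.filter fun e => e.2 = y).card

/-- A finite set of naturals is an interval: nonempty and consisting of
consecutive integers. -/
def IsIntervalFinset (S : Finset ℕ) : Prop :=
  S.Nonempty ∧ ∀ a ∈ S, ∀ b ∈ S, ∀ c, a ≤ c → c ≤ b → c ∈ S

/-- The coloring is interval in every vertex of the part `α` (every vertex
with at least one incident edge has an interval spectrum). -/
def IntervalOnX {α β : Type*} [DecidableEq α] (E : Finset (α × β))
    (φ : α × β → ℕ) : Prop :=
  ∀ x : α, (spectX E φ x).Nonempty → IsIntervalFinset (spectX E φ x)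

/-- The coloring is interval in every vertex of the part `β`. -/
def IntervalOnY {α β : Type*} [DecidableEq β] (E : Finset (α × β))
    (φ : α × β → ℕ) : Prop :=
  ∀ y : β, (spectY E φ y).Nonempty → IsIntervalFinset (spectY E φ y)

/-- Maximum degree of the bipartite graph. -/
def maxDeg {α β : Type*} [Fintype α] [Fintype β] [DecidableEq α] [DecidableEq β]
    (E : Finset (α × β)) : ℕ :=
  max (Finset.univ.sup (degX E)) (Finset.univ.sup (degY E))

/-!
Induction on `Δ`. For `Δ > 0` there is a matching `M` covering every vertex of degree `Δ` whose
`X`-ends all have degree `Δ`. Hall's condition holds (by double counting) for the `X`-vertices of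
degree `Δ` and for the `Y`-vertices of degree `Δ`, whose neighbours have degree `Δ` because
`d(y) ≤ d(x)`; the two matchings are then merged as in the Mendelsohn–Dulmage theorem. Removing
`M` lowers every `X`-degree equal to `Δ` and no other `X`-degree, lowers `Δ` by one and preserves
`d(y) ≤ d(x)`; colouring `M` with `Δ` extends the coloring of the rest given by induction.
-/

open Finset

section BipartiteMatching

variable {α β : Type*}

def IsBipartiteMatching (M : Finset (α × β)) : Prop :=
  ∀ e ∈ M, ∀ e' ∈ M, (e.1 = e'.1 ∨ e.2 = e'.2) → e = e'

lemma degX_pos_iff [DecidableEq α] {E : Finset (α × β)} {x : α} :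
    0 < degX E x ↔ ∃ e ∈ E, e.1 = x := by
  simp [degX, card_pos, filter_nonempty_iff]

lemma degY_pos_iff [DecidableEq β] {E : Finset (α × β)} {y : β} :
    0 < degY E y ↔ ∃ e ∈ E, e.2 = y := by
  simp [degY, card_pos, filter_nonempty_iff]

lemma degX_sdiff_add [DecidableEq α] [DecidableEq β] {E M : Finset (α × β)} (hME : M ⊆ E)
    (x : α) : degX (E \ M) x + degX M x = degX E x := by
  rw [degX, degX, degX, ← card_union_of_disjoint (disjoint_filter_filter sdiff_disjoint),
    ← filter_union, sdiff_union_of_subset hME]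

lemma degY_sdiff_add [DecidableEq α] [DecidableEq β] {E M : Finset (α × β)} (hME : M ⊆ E)
    (y : β) : degY (E \ M) y + degY M y = degY E y := by
  rw [degY, degY, degY, ← card_union_of_disjoint (disjoint_filter_filter sdiff_disjoint),
    ← filter_union, sdiff_union_of_subset hME]

lemma degX_image_swap [DecidableEq α] [DecidableEq β] (E : Finset (α × β)) (y : β) :
    degX (E.image Prod.swap) y = degY E y := by
  rw [degX, degY, filter_image, card_image_of_injective _ Prod.swap_injective]
  rfl

lemma degY_image_swap [DecidableEq α] [DecidableEq β] (E : Finset (α × β)) (x : α) :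
    degY (E.image Prod.swap) x = degX E x := by
  rw [degY, degX, filter_image, card_image_of_injective _ Prod.swap_injective]
  rfl

namespace IsBipartiteMatching

variable {M : Finset (α × β)}

lemma degX_le_one [DecidableEq α] (hM : IsBipartiteMatching M) (x : α) : degX M x ≤ 1 :=
  card_le_one.mpr fun e he e' he' ↦ by
    rw [mem_filter] at he he'
    exact hM e he.1 e' he'.1 (.inl (he.2.trans he'.2.symm))

lemma degY_le_one [DecidableEq β] (hM : IsBipartiteMatching M) (y : β) : degY M y ≤ 1 :=
  card_le_one.mpr fun e he e' he' ↦ by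
    rw [mem_filter] at he he'
    exact hM e he.1 e' he'.1 (.inr (he.2.trans he'.2.symm))

lemma image_swap [DecidableEq α] [DecidableEq β] (hM : IsBipartiteMatching M) :
    IsBipartiteMatching (M.image Prod.swap) := by
  simp only [IsBipartiteMatching, mem_image]
  rintro _ ⟨e, he, rfl⟩ _ ⟨e', he', rfl⟩ hshare
  rw [hM e he e' he' hshare.symm]

end IsBipartiteMatching

lemma exists_matching_covering_of_le_degX [DecidableEq α] [DecidableEq β]
    (E : Finset (α × β)) (A : Set α) {d : ℕ} (hd : 0 < d)
    (hA : ∀ x ∈ A, d ≤ degX E x) (hY : ∀ y, degY E y ≤ d) :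
    ∃ M ⊆ E, IsBipartiteMatching M ∧ (∀ x ∈ A, ∃ e ∈ M, e.1 = x) ∧ ∀ e ∈ M, e.1 ∈ A := by
  classical
  let N : A → Finset β := fun a ↦ (E.filter fun e : α × β ↦ e.1 = a).image Prod.snd
  have hall : ∀ s : Finset A, #s ≤ #(s.biUnion N) := by
    intro s
    refine Nat.le_of_mul_le_mul_right ?_ hd
    refine card_mul_le_card_mul (fun (a : A) b ↦ ((a : α), b) ∈ E) (fun a ha ↦ ?_) (fun b _ ↦ ?_)
    · refine (hA a a.2).trans (card_le_card_of_injOn Prod.snd (fun e he ↦ ?_) ?_)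
      · rw [coe_filter] at he
        rw [bipartiteAbove, coe_filter, Set.mem_ofPred_eq, mem_biUnion, ← he.2]
        exact ⟨⟨a, ha, mem_image_of_mem _ (mem_filter.mpr he)⟩, he.1⟩
      · rintro e he e' he' h
        rw [coe_filter] at he he'
        exact Prod.ext (he.2.trans he'.2.symm) h
    · rw [bipartiteBelow]
      refine le_trans ?_ (hY b)
      refine card_le_card_of_injOn (fun a ↦ ((a : α), b)) (fun a ha ↦ ?_) ?_
      · rw [coe_filter] at ha
        simpa using ha.2
      · intro a _ a' _ h
        exact Subtype.ext (Prod.ext_iff.mp h).1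
  obtain ⟨f, hf_inj, hfN⟩ := (all_card_le_biUnion_card_iff_exists_injective N).mp hall
  have hfE : ∀ a : A, ((a : α), f a) ∈ E := fun a ↦ by
    obtain ⟨e, he, hfe⟩ := mem_image.mp (hfN a)
    rw [mem_filter] at he
    rw [← hfe, ← he.2]
    exact he.1
  refine ⟨E.filter fun e ↦ ∃ h : e.1 ∈ A, f ⟨e.1, h⟩ = e.2, filter_subset _ _, ?_, ?_, ?_⟩
  · simp only [IsBipartiteMatching, mem_filter, Prod.forall]
    rintro x y ⟨-, _, hy⟩ x' y' ⟨-, _, hy'⟩ (rfl | rfl)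
    · exact Prod.ext rfl (hy.symm.trans hy')
    · exact Prod.ext (congrArg Subtype.val (hf_inj (hy.trans hy'.symm))) rfl
  · exact fun x hx ↦ ⟨(x, f ⟨x, hx⟩), mem_filter.mpr ⟨hfE ⟨x, hx⟩, hx, rfl⟩, rfl⟩
  · exact fun e he ↦ (mem_filter.mp he).2.1

lemma exists_matching_covering_of_matchings [DecidableEq α] [DecidableEq β]
    {M₁ M₂ : Finset (α × β)} {A : Set α} {B : Set β}
    (h₁ : IsBipartiteMatching M₁) (h₂ : IsBipartiteMatching M₂)
    (hA : ∀ x ∈ A, ∃ e ∈ M₁, e.1 = x) (hB : ∀ y ∈ B, ∃ e ∈ M₂, e.2 = y)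
    (hM₂A : ∀ e ∈ M₂, e.1 ∈ A) :
    ∃ M ⊆ M₁ ∪ M₂, IsBipartiteMatching M ∧ (∀ x ∈ A, ∃ e ∈ M, e.1 = x) ∧
      (∀ y ∈ B, ∃ e ∈ M, e.2 = y) ∧ ∀ e ∈ M, e.1 ∈ A := by
  classical
  -- `S` is the least set containing the vertices of `A` missed by `M₂` and closed under following
  -- an `M₁`-edge and then the `M₂`-edge at its `Y`-end; `M` uses `M₁` on `S` and `M₂` off `S`.
  let F : Set α →o Set α :=
    { toFun := fun S ↦ {x | (x ∈ A ∧ ∀ e ∈ M₂, e.1 ≠ x) ∨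
        ∃ e₁ ∈ M₁, e₁.1 ∈ S ∧ ∃ e₂ ∈ M₂, e₂.2 = e₁.2 ∧ e₂.1 = x}
      monotone' := fun _ _ hST _ ↦
        Or.imp_right fun ⟨e₁, he₁, hS, h⟩ ↦ ⟨e₁, he₁, hST hS, h⟩ }
  set S := F.lfp
  have hS : ∀ x, x ∈ S ↔ (x ∈ A ∧ ∀ e ∈ M₂, e.1 ≠ x) ∨
      ∃ e₁ ∈ M₁, e₁.1 ∈ S ∧ ∃ e₂ ∈ M₂, e₂.2 = e₁.2 ∧ e₂.1 = x :=
    fun x ↦ Set.ext_iff.mp F.map_lfp.symm x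
  have hSA : S ⊆ A := fun x hx ↦ by
    rcases (hS x).mp hx with ⟨hxA, -⟩ | ⟨-, -, -, e₂, he₂, -, rfl⟩
    exacts [hxA, hM₂A e₂ he₂]
  have disjoint_ends : ∀ e ∈ M₁, e.1 ∈ S → ∀ e' ∈ M₂, e'.1 ∉ S → ¬(e.1 = e'.1 ∨ e.2 = e'.2) := by
    rintro e he heS e' he' he'S (h | h)
    · exact he'S (h ▸ heS)
    · exact he'S ((hS _).mpr (.inr ⟨e, he, heS, e', he', h.symm, rfl⟩))
  refine ⟨M₁.filter (·.1 ∈ S) ∪ M₂.filter (·.1 ∉ S),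
    union_subset_union (filter_subset _ _) (filter_subset _ _), ?_, ?_, ?_, ?_⟩
  · simp only [IsBipartiteMatching, mem_union, mem_filter]
    rintro e (⟨he, heS⟩ | ⟨he, heS⟩) e' (⟨he', he'S⟩ | ⟨he', he'S⟩) h
    · exact h₁ e he e' he' h
    · exact absurd h (disjoint_ends e he heS e' he' he'S)
    · exact absurd (h.imp Eq.symm Eq.symm) (disjoint_ends e' he' he'S e he heS)
    · exact h₂ e he e' he' h
  · intro x hxA
    by_cases hx : x ∈ S
    · obtain ⟨e, he, rfl⟩ := hA x hxA
      exact ⟨e, mem_union_left _ (mem_filter.mpr ⟨he, hx⟩), rfl⟩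
    · have : ∃ e ∈ M₂, e.1 = x := by
        by_contra! h
        exact hx ((hS x).mpr (.inl ⟨hxA, h⟩))
      obtain ⟨e, he, rfl⟩ := this
      exact ⟨e, mem_union_right _ (mem_filter.mpr ⟨he, hx⟩), rfl⟩
  · intro y hyB
    obtain ⟨e₂, he₂, rfl⟩ := hB y hyB
    by_cases hx : e₂.1 ∈ S
    · rcases (hS _).mp hx with ⟨-, h⟩ | ⟨e₁, he₁, he₁S, e₂', he₂', hy, hx'⟩
      · exact absurd rfl (h e₂ he₂)
      · obtain rfl := h₂ e₂' he₂' e₂ he₂ (.inl hx')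
        exact ⟨e₁, mem_union_left _ (mem_filter.mpr ⟨he₁, he₁S⟩), hy.symm⟩
    · exact ⟨e₂, mem_union_right _ (mem_filter.mpr ⟨he₂, hx⟩), rfl⟩
  · simp only [mem_union, mem_filter]
    rintro e (⟨-, heS⟩ | ⟨he, -⟩)
    exacts [hSA heS, hM₂A e he]

lemma IsProperEdgeColoring.ite_mem_of_isBipartiteMatching [DecidableEq α] [DecidableEq β]
    {E M : Finset (α × β)} {t : ℕ} {φ : α × β → ℕ}
    (hφ : IsProperEdgeColoring (E \ M) t φ) (hME : M ⊆ E) (hM : IsBipartiteMatching M)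
    (hM_ne : M.Nonempty) :
    IsProperEdgeColoring E (t + 1) fun e ↦ if e ∈ M then t + 1 else φ e := by
  obtain ⟨hrange, hsurj, hproper⟩ := hφ
  have hle : ∀ e ∈ E, e ∉ M → 1 ≤ φ e ∧ φ e ≤ t := fun e he heM ↦
    mem_Icc.mp (hrange e (mem_sdiff.mpr ⟨he, heM⟩))
  refine ⟨fun e he ↦ ?_, fun c hc ↦ ?_, fun e he e' he' hne hadj ↦ ?_⟩
  · dsimp only
    split_ifs with heM
    · simp
    · have := hle e he heM
      simp only [mem_Icc]
      omega
  · rw [mem_Icc] at hc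
    rcases hc.2.eq_or_lt with rfl | hlt
    · obtain ⟨e, he⟩ := hM_ne
      exact ⟨e, hME he, if_pos he⟩
    · obtain ⟨e, he, rfl⟩ := hsurj c (mem_Icc.mpr ⟨hc.1, Nat.le_of_lt_succ hlt⟩)
      exact ⟨e, (mem_sdiff.mp he).1, if_neg (mem_sdiff.mp he).2⟩
  · dsimp only
    split_ifs with heM he'M he'M
    · exact absurd (hM e heM e' he'M hadj) hne
    · have := hle e' he' he'M
      omega
    · have := hle e he heM
      omega
    · exact hproper e (mem_sdiff.mpr ⟨he, heM⟩) e' (mem_sdiff.mpr ⟨he', he'M⟩) hne hadj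

lemma spectX_ite_mem [DecidableEq α] [DecidableEq β] {E M : Finset (α × β)} (hME : M ⊆ E)
    (c : ℕ) (φ : α × β → ℕ) (x : α) :
    spectX E (fun e ↦ if e ∈ M then c else φ e) x =
      spectX (E \ M) φ x ∪ if degX M x = 0 then ∅ else {c} := by
  rw [spectX, ← sdiff_union_of_subset hME, filter_union, image_union, sdiff_union_of_subset hME]
  congr 1
  · exact image_congr fun e he ↦ if_neg (mem_sdiff.mp (mem_filter.mp he).1).2
  · split_ifs with hx
    · rw [degX, card_eq_zero] at hx
      rw [hx, image_empty]
    · rw [image_congr fun e he ↦ if_pos (mem_filter.mp he).1]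
      exact image_const (card_ne_zero.mp hx) c

section MaxDegree

variable [Fintype α] [Fintype β] [DecidableEq α] [DecidableEq β]

lemma degX_le_maxDeg (E : Finset (α × β)) (x : α) : degX E x ≤ maxDeg E :=
  (le_sup (mem_univ x)).trans (le_max_left _ _)

lemma degY_le_maxDeg (E : Finset (α × β)) (y : β) : degY E y ≤ maxDeg E :=
  (le_sup (mem_univ y)).trans (le_max_right _ _)

lemma maxDeg_le_iff {E : Finset (α × β)} {k : ℕ} :
    maxDeg E ≤ k ↔ (∀ x, degX E x ≤ k) ∧ ∀ y, degY E y ≤ k := by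
  simp [maxDeg, Finset.sup_le_iff]

lemma exists_degX_eq_maxDeg {E : Finset (α × β)} (h : ∀ e ∈ E, degY E e.2 ≤ degX E e.1)
    (hE : 0 < maxDeg E) : ∃ x, degX E x = maxDeg E := by
  by_contra! hX
  obtain ⟨y, hy⟩ : ∃ y, degY E y = maxDeg E := by
    by_contra! hY
    have : maxDeg E ≤ maxDeg E - 1 := maxDeg_le_iff.mpr
      ⟨fun x ↦ Nat.le_sub_one_of_lt ((degX_le_maxDeg E x).lt_of_ne (hX x)),
       fun y ↦ Nat.le_sub_one_of_lt ((degY_le_maxDeg E y).lt_of_ne (hY y))⟩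
    omega
  obtain ⟨e, he, rfl⟩ := degY_pos_iff.mp (hy ▸ hE)
  exact hX e.1 ((degX_le_maxDeg E e.1).antisymm (hy ▸ h e he))

lemma eq_empty_of_maxDeg_eq_zero {E : Finset (α × β)} (hE : maxDeg E = 0) : E = ∅ :=
  eq_empty_of_forall_notMem fun e he ↦ by
    have := degX_le_maxDeg E e.1
    have := degX_pos_iff.mpr ⟨e, he, rfl⟩
    omega

structure IsMaxDegreeMatching (E M : Finset (α × β)) : Prop where
  subset : M ⊆ E
  isBipartiteMatching : IsBipartiteMatching M
  degX_eq : ∀ x, degX M x = if degX E x = maxDeg E then 1 else 0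
  degY_eq_one : ∀ y, degY E y = maxDeg E → degY M y = 1

lemma exists_isMaxDegreeMatching {E : Finset (α × β)} (h : ∀ e ∈ E, degY E e.2 ≤ degX E e.1)
    (hE : 0 < maxDeg E) : ∃ M, IsMaxDegreeMatching E M := by
  set A : Set α := {x | degX E x = maxDeg E}
  set B : Set β := {y | degY E y = maxDeg E}
  obtain ⟨M₁, hM₁E, hM₁, hcovA, -⟩ := exists_matching_covering_of_le_degX E A hE
    (fun x hx ↦ hx.ge) (degY_le_maxDeg E)
  obtain ⟨M₂, hM₂E, hM₂, hcovB, hM₂B⟩ := exists_matching_covering_of_le_degX (E.image Prod.swap)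
    B hE (fun y hy ↦ (degX_image_swap E y).symm ▸ hy.ge)
    (fun x ↦ (degY_image_swap E x).symm ▸ degX_le_maxDeg E x)
  have hM₂E' : M₂.image Prod.swap ⊆ E := by
    simpa [image_image] using image_subset_image (f := Prod.swap) hM₂E
  obtain ⟨M, hM, hMm, hcovX, hcovY, hMA⟩ :=
    exists_matching_covering_of_matchings (A := A) (B := B) hM₁ hM₂.image_swap hcovA
      (fun y hy ↦ by
        obtain ⟨e, he, rfl⟩ := hcovB y hy
        exact ⟨e.swap, mem_image_of_mem _ he, rfl⟩)
      (fun e he ↦ by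
        obtain ⟨e', he', rfl⟩ := mem_image.mp he
        exact (degX_le_maxDeg E _).antisymm
          ((hM₂B e' he').symm.trans_le (h _ (hM₂E' (mem_image_of_mem _ he')))))
  refine ⟨M, hM.trans (union_subset hM₁E hM₂E'), hMm, fun x ↦ ?_, fun y hy ↦ ?_⟩
  · split_ifs with hx
    · exact (hMm.degX_le_one x).antisymm (degX_pos_iff.mpr (hcovX x hx))
    · by_contra hne
      obtain ⟨e, he, rfl⟩ := degX_pos_iff.mp (Nat.pos_of_ne_zero hne)
      exact hx (hMA e he)
  · exact (hMm.degY_le_one y).antisymm (degY_pos_iff.mpr (hcovY y hy))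

namespace IsMaxDegreeMatching

variable {E M : Finset (α × β)} {n : ℕ}

lemma nonempty (hM : IsMaxDegreeMatching E M) (h : ∀ e ∈ E, degY E e.2 ≤ degX E e.1)
    (hE : 0 < maxDeg E) : M.Nonempty := by
  obtain ⟨x, hx⟩ := exists_degX_eq_maxDeg h hE
  have hx' := hM.degX_eq x
  rw [if_pos hx] at hx'
  obtain ⟨e, he, -⟩ := degX_pos_iff.mp hx'.ge
  exact ⟨e, he⟩

lemma degX_sdiff (hM : IsMaxDegreeMatching E M) (hn : maxDeg E = n + 1) (x : α) :
    degX (E \ M) x = if degX E x = n + 1 then n else degX E x := by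
  have := degX_sdiff_add hM.subset x
  rw [hM.degX_eq x, hn] at this
  split_ifs at this ⊢ <;> omega

lemma degY_sdiff_le (hM : IsMaxDegreeMatching E M) (y : β) : degY (E \ M) y ≤ degY E y :=
  (Nat.le_add_right _ _).trans (degY_sdiff_add hM.subset y).le

lemma degY_sdiff_le_pred (hM : IsMaxDegreeMatching E M) (hn : maxDeg E = n + 1) (y : β) :
    degY (E \ M) y ≤ n := by
  have hsum := degY_sdiff_add hM.subset y
  have hle := degY_le_maxDeg E y
  by_cases hy : degY E y = maxDeg E
  · have := hM.degY_eq_one y hy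
    omega
  · omega

lemma maxDeg_sdiff (hM : IsMaxDegreeMatching E M) (h : ∀ e ∈ E, degY E e.2 ≤ degX E e.1)
    (hn : maxDeg E = n + 1) : maxDeg (E \ M) = n := by
  refine le_antisymm (maxDeg_le_iff.mpr ⟨fun x ↦ ?_, hM.degY_sdiff_le_pred hn⟩) ?_
  · have := degX_le_maxDeg E x
    rw [hM.degX_sdiff hn]
    split_ifs <;> omega
  · obtain ⟨x, hx⟩ := exists_degX_eq_maxDeg h (by omega)
    calc n = degX (E \ M) x := by rw [hM.degX_sdiff hn, if_pos (hx.trans hn)]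
      _ ≤ maxDeg (E \ M) := degX_le_maxDeg _ x

lemma sdiff_degY_le_degX (hM : IsMaxDegreeMatching E M) (h : ∀ e ∈ E, degY E e.2 ≤ degX E e.1)
    (hn : maxDeg E = n + 1) : ∀ e ∈ E \ M, degY (E \ M) e.2 ≤ degX (E \ M) e.1 := by
  intro e he
  rw [hM.degX_sdiff hn]
  split_ifs
  · exact hM.degY_sdiff_le_pred hn e.2
  · exact (hM.degY_sdiff_le e.2).trans (h e (mem_sdiff.mp he).1)

lemma spectX_ite_mem_eq_Icc (hM : IsMaxDegreeMatching E M) (hn : maxDeg E = n + 1) {φ : α × β → ℕ}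
    (hφ : ∀ x, spectX (E \ M) φ x = Icc 1 (degX (E \ M) x)) (x : α) :
    spectX E (fun e ↦ if e ∈ M then n + 1 else φ e) x = Icc 1 (degX E x) := by
  rw [spectX_ite_mem hM.subset, hφ, hM.degX_sdiff hn, hM.degX_eq, hn]
  by_cases hx : degX E x = n + 1
  · rw [if_pos hx, if_pos hx, if_neg one_ne_zero, hx, union_singleton,
      insert_Icc_right_eq_Icc_add_one (by omega)]
  · rw [if_neg hx, if_neg hx, if_pos rfl, union_empty]

end IsMaxDegreeMatching

end MaxDegree

end BipartiteMatching

/-- If for every edge `(x,y)` we have `d(y) ≤ d(x)`, then there is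
a proper edge `Δ(G)`-coloring whose spectrum at every `x ∈ X` is
`{1,…,d(x)}`. -/
theorem stmt3 {α β : Type*} [Fintype α] [Fintype β] [DecidableEq α] [DecidableEq β]
    (E : Finset (α × β))
    (h : ∀ e ∈ E, degY E e.2 ≤ degX E e.1) :
    ∃ φ : α × β → ℕ, IsProperEdgeColoring E (maxDeg E) φ ∧
      ∀ x : α, spectX E φ x = Finset.Icc 1 (degX E x) := by
  induction hΔ : maxDeg E generalizing E with
  | zero =>
    obtain rfl := eq_empty_of_maxDeg_eq_zero hΔ
    exact ⟨fun _ ↦ 0, ⟨by simp, by simp, by simp⟩, fun x ↦ by simp [spectX, degX]⟩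
  | succ n ih =>
    obtain ⟨M, hM⟩ := exists_isMaxDegreeMatching h (by omega)
    obtain ⟨φ, hφ, hspec⟩ := ih (E \ M) (hM.sdiff_degY_le_degX h hΔ) (hM.maxDeg_sdiff h hΔ)
    exact ⟨fun e ↦ if e ∈ M then n + 1 else φ e,
      hφ.ite_mem_of_isBipartiteMatching hM.subset hM.isBipartiteMatching (hM.nonempty h (by omega)),
      hM.spectX_ite_mem_eq_Icc hΔ hspec⟩
end

section
/- Let G be a bipartite graph with parts X and Y, and R the set of vertices of one part. If t is any integer with w_R(G) ≤ t ≤ |E(G)|, then there exists a proper edge t-coloring of G interval on R. -/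
section Stmt6Helpers

set_option linter.unusedSectionVars false

variable {α β : Type*} [DecidableEq α] [DecidableEq β]

lemma mem_spectX {E : Finset (α × β)} {φ : α × β → ℕ} {x : α} {c : ℕ} :
    c ∈ spectX E φ x ↔ ∃ e, e ∈ E ∧ e.1 = x ∧ φ e = c := by
  unfold spectX
  simp only [Finset.mem_image, Finset.mem_filter]
  constructor
  · rintro ⟨e, ⟨he, hex⟩, hc⟩; exact ⟨e, he, hex, hc⟩
  · rintro ⟨e, he, hex, hc⟩; exact ⟨e, ⟨he, hex⟩, hc⟩

lemma interval_image_add {S : Finset ℕ} (k : ℕ) (h : IsIntervalFinset S) :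
    IsIntervalFinset (S.image (· + k)) := by
  obtain ⟨hne, hint⟩ := h
  refine ⟨hne.image _, ?_⟩
  intro a ha b hb c hac hcb
  simp only [Finset.mem_image] at ha hb ⊢
  obtain ⟨a0, ha0, rfl⟩ := ha
  obtain ⟨b0, hb0, rfl⟩ := hb
  exact ⟨c - k, hint a0 ha0 b0 hb0 (c - k) (by omega) (by omega), by omega⟩

lemma interval_image_sub {S : Finset ℕ} (k : ℕ) (hk : ∀ c ∈ S, k < c) (h : IsIntervalFinset S) :
    IsIntervalFinset (S.image (· - k)) := by
  obtain ⟨hne, hint⟩ := h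
  refine ⟨hne.image _, ?_⟩
  intro a ha b hb c hac hcb
  simp only [Finset.mem_image] at ha hb ⊢
  obtain ⟨a0, ha0, rfl⟩ := ha
  obtain ⟨b0, hb0, rfl⟩ := hb
  have h1 := hk a0 ha0; have h2 := hk b0 hb0
  exact ⟨c + k, hint a0 ha0 b0 hb0 (c + k) (by omega) (by omega), by omega⟩

lemma interval_eq_Icc {S : Finset ℕ} (h : IsIntervalFinset S) :
    S = Finset.Icc (S.min' h.1) (S.max' h.1) := by
  apply Finset.ext; intro c
  simp only [Finset.mem_Icc]
  constructor
  · intro hc; exact ⟨Finset.min'_le _ _ hc, Finset.le_max' _ _ hc⟩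
  · rintro ⟨h1, h2⟩
    exact h.2 _ (S.min'_mem h.1) _ (S.max'_mem h.1) c h1 h2

lemma step : ∀ (n : ℕ) (E : Finset (α × β)) (t : ℕ) (φ : α × β → ℕ),
    E.card = n → IsProperEdgeColoring E t φ → IntervalOnX E φ → t < E.card →
    ∃ ψ, IsProperEdgeColoring E (t + 1) ψ ∧ IntervalOnX E ψ := by
  intro n
  induction n using Nat.strong_induction_on with
  | _ n IH =>
    intro E t φ hn hcol hX hlt
    obtain ⟨hmem, hsurj, hprop⟩ := hcol
    have hmem' : ∀ e ∈ E, 1 ≤ φ e ∧ φ e ≤ t := by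
      intro e he; have := hmem e he; simpa [Finset.mem_Icc] using this
    have hE0 : E.Nonempty := Finset.card_pos.mp (by omega)
    have ht1 : 1 ≤ t := by
      obtain ⟨e0, he0⟩ := hE0
      exact le_trans (hmem' e0 he0).1 (hmem' e0 he0).2
    -- CASE 1
    by_cases hC1 : ∃ eb, eb ∈ E ∧ ∃ e2, e2 ∈ E ∧ e2.1 ≠ eb.1 ∧ φ e2 = φ eb ∧
        (∃ et, et ∈ E ∧ et.1 = eb.1 ∧ φ et = t) ∧ (∀ e ∈ E, e.1 = eb.1 → φ eb ≤ φ e)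
    · obtain ⟨eb, hebE, e2, he2E, hne, heq, ⟨et, hetE, hetv, hett⟩, hmin⟩ := hC1
      have he2b : e2 ≠ eb := fun h => hne (by rw [h])
      refine ⟨fun e => if e = eb then t + 1 else φ e, ⟨?_, ?_, ?_⟩, ?_⟩
      · intro e he
        by_cases h : e = eb
        · simp [h, Finset.mem_Icc]
        · simp only [if_neg h, Finset.mem_Icc]
          have := hmem' e he; omega
      · intro c hc
        simp only [Finset.mem_Icc] at hc
        by_cases hct : c ≤ t
        · obtain ⟨e, he, hec⟩ := hsurj c (by simp [Finset.mem_Icc]; omega)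
          by_cases h : e = eb
          · refine ⟨e2, he2E, ?_⟩
            show (if e2 = eb then t + 1 else φ e2) = c
            rw [if_neg he2b, heq, ← h, hec]
          · refine ⟨e, he, ?_⟩
            show (if e = eb then t + 1 else φ e) = c
            rw [if_neg h, hec]
        · have : c = t + 1 := by omega
          exact ⟨eb, hebE, by simp [this]⟩
      · intro e he e' he' hnee hadj
        by_cases h : e = eb <;> by_cases h' : e' = eb
        · exact absurd (h.trans h'.symm) hnee
        · simp only [if_pos h, if_neg h']
          have := hmem' e' he'; omega
        · simp only [if_neg h, if_pos h']
          have := hmem' e he; omega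
        · simp only [if_neg h, if_neg h']
          exact hprop e he e' he' hnee hadj
      · -- IntervalOnX
        intro x hxne
        by_cases hx : x = eb.1
        · subst hx
          have hspec : spectX E (fun e => if e = eb then t + 1 else φ e) eb.1
              = insert (t + 1) ((spectX E φ eb.1).erase (φ eb)) := by
            apply Finset.ext; intro c
            simp only [Finset.mem_insert, Finset.mem_erase]
            rw [mem_spectX]
            constructor
            · rintro ⟨e, he, hev, hec⟩
              by_cases h : e = eb
              · left; rw [← hec, if_pos h]
              · right
                refine ⟨?_, mem_spectX.mpr ⟨e, he, hev, by rw [← hec, if_neg h]⟩⟩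
                rw [← hec, if_neg h]
                exact hprop e he eb hebE h (Or.inl hev)
            · rintro (rfl | ⟨hcne, hcmem⟩)
              · exact ⟨eb, hebE, rfl, by simp⟩
              · obtain ⟨e, he, hev, hec⟩ := mem_spectX.mp hcmem
                have henb : e ≠ eb := by
                  intro h; rw [h] at hec; exact hcne hec.symm
                exact ⟨e, he, hev, by rw [if_neg henb, hec]⟩
          rw [hspec] at hxne ⊢
          have hLmem : φ eb ∈ spectX E φ eb.1 := mem_spectX.mpr ⟨eb, hebE, rfl, rfl⟩
          have hSint := hX eb.1 ⟨φ eb, hLmem⟩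
          have htS : t ∈ spectX E φ eb.1 := mem_spectX.mpr ⟨et, hetE, hetv, hett⟩
          have hminS : ∀ u ∈ spectX E φ eb.1, φ eb ≤ u := by
            intro u hu
            obtain ⟨e, he, hev, hec⟩ := mem_spectX.mp hu
            rw [← hec]; exact hmin e he hev
          have hub : ∀ u ∈ spectX E φ eb.1, u ≤ t := by
            intro u hu
            obtain ⟨e, he, _, hec⟩ := mem_spectX.mp hu
            rw [← hec]; exact (hmem' e he).2
          refine ⟨hxne, ?_⟩
          intro a ha b hb c hac hcb
          simp only [Finset.mem_insert, Finset.mem_erase] at ha hb ⊢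
          by_cases hc : c = t + 1
          · exact Or.inl hc
          · right
            have hbt : b ≤ t + 1 := by
              rcases hb with rfl | ⟨_, hbS⟩
              · exact le_refl _
              · exact le_trans (hub b hbS) (by omega)
            have hct : c ≤ t := by omega
            rcases ha with rfl | ⟨hane, haS⟩
            · omega
            · have hLa : φ eb < a := lt_of_le_of_ne (hminS a haS) (Ne.symm hane)
              have hcS : c ∈ spectX E φ eb.1 := hSint.2 a haS t htS c hac hct
              exact ⟨by omega, hcS⟩
        · have hspec : spectX E (fun e => if e = eb then t + 1 else φ e) x
              = spectX E φ x := by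
            apply Finset.ext; intro c
            rw [mem_spectX, mem_spectX]
            constructor
            · rintro ⟨e, he, hev, hec⟩
              have : e ≠ eb := fun h => hx (by rw [← hev, h])
              exact ⟨e, he, hev, by rw [← hec, if_neg this]⟩
            · rintro ⟨e, he, hev, hec⟩
              have : e ≠ eb := fun h => hx (by rw [← hev, h])
              exact ⟨e, he, hev, by rw [if_neg this, hec]⟩
          rw [hspec] at hxne ⊢
          exact hX x hxne
    · -- CASE 2: a cut level s
      by_cases hC2 : ∃ s, 1 ≤ s ∧ s < t ∧
          ∀ x : α, ¬(s ∈ spectX E φ x ∧ s + 1 ∈ spectX E φ x)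
      · obtain ⟨s, hs1, hst, hcut⟩ := hC2
        -- vertex dichotomy
        have D : ∀ x : α, (∀ e ∈ E, e.1 = x → φ e ≤ s) ∨ (∀ e ∈ E, e.1 = x → s < φ e) := by
          intro x
          by_contra h
          push_neg at h
          obtain ⟨⟨eh, hehE, hehx, hehs⟩, ⟨el, helE, helx, hels⟩⟩ := h
          have hlo : φ el ∈ spectX E φ x := mem_spectX.mpr ⟨el, helE, helx, rfl⟩
          have hhi : φ eh ∈ spectX E φ x := mem_spectX.mpr ⟨eh, hehE, hehx, rfl⟩
          have hint := hX x ⟨φ el, hlo⟩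
          refine hcut x ⟨?_, ?_⟩
          · exact hint.2 (φ el) hlo (φ eh) hhi s hels (by omega)
          · exact hint.2 (φ el) hlo (φ eh) hhi (s + 1) (by omega) (by omega)
        set Elo := E.filter (fun e => φ e ≤ s) with hElo
        set Ehi := E.filter (fun e => ¬(φ e ≤ s)) with hEhi
        have hsum : Elo.card + Ehi.card = E.card :=
          Finset.card_filter_add_card_filter_not (p := fun e => φ e ≤ s)
        have hlo_ne : Elo.Nonempty := by
          obtain ⟨e, he, hec⟩ := hsurj 1 (by simp [Finset.mem_Icc]; omega)
          exact ⟨e, Finset.mem_filter.mpr ⟨he, by omega⟩⟩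
        have hhi_ne : Ehi.Nonempty := by
          obtain ⟨e, he, hec⟩ := hsurj t (by simp [Finset.mem_Icc, ht1])
          exact ⟨e, Finset.mem_filter.mpr ⟨he, by omega⟩⟩
        -- restricted colorings
        have hlo_col : IsProperEdgeColoring Elo s φ := by
          refine ⟨?_, ?_, ?_⟩
          · intro e he
            obtain ⟨heE, hes⟩ := Finset.mem_filter.mp he
            have := hmem' e heE
            simp [Finset.mem_Icc]; omega
          · intro c hc
            simp only [Finset.mem_Icc] at hc
            obtain ⟨e, he, hec⟩ := hsurj c (by simp [Finset.mem_Icc]; omega)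
            exact ⟨e, Finset.mem_filter.mpr ⟨he, by omega⟩, hec⟩
          · intro e he e' he' hnee hadj
            exact hprop e (Finset.mem_filter.mp he).1 e' (Finset.mem_filter.mp he').1 hnee hadj
        have hlo_X : IntervalOnX Elo φ := by
          intro x hxne
          rcases D x with hdx | hdx
          · have hspec : spectX Elo φ x = spectX E φ x := by
              apply Finset.ext; intro c
              rw [mem_spectX, mem_spectX]
              constructor
              · rintro ⟨e, he, hex, hec⟩
                exact ⟨e, (Finset.mem_filter.mp he).1, hex, hec⟩
              · rintro ⟨e, he, hex, hec⟩
                exact ⟨e, Finset.mem_filter.mpr ⟨he, hdx e he hex⟩, hex, hec⟩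
            rw [hspec] at hxne ⊢
            exact hX x hxne
          · exfalso
            obtain ⟨c, hc⟩ := hxne
            obtain ⟨e, he, hex, _⟩ := mem_spectX.mp hc
            obtain ⟨heE, hes⟩ := Finset.mem_filter.mp he
            exact absurd hes (by have := hdx e heE hex; omega)
        have hhi_col : IsProperEdgeColoring Ehi (t - s) (fun e => φ e - s) := by
          refine ⟨?_, ?_, ?_⟩
          · intro e he
            obtain ⟨heE, hes⟩ := Finset.mem_filter.mp he
            have := hmem' e heE
            simp only [Finset.mem_Icc]; omega
          · intro c hc
            simp only [Finset.mem_Icc] at hc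
            obtain ⟨e, he, hec⟩ := hsurj (c + s) (by simp [Finset.mem_Icc]; omega)
            refine ⟨e, Finset.mem_filter.mpr ⟨he, by omega⟩, ?_⟩
            show φ e - s = c
            omega
          · intro e he e' he' hnee hadj
            obtain ⟨heE, hes⟩ := Finset.mem_filter.mp he
            obtain ⟨heE', hes'⟩ := Finset.mem_filter.mp he'
            have := hprop e heE e' heE' hnee hadj
            show φ e - s ≠ φ e' - s
            omega
        have hhi_X : IntervalOnX Ehi (fun e => φ e - s) := by
          intro x hxne
          rcases D x with hdx | hdx
          · exfalso
            obtain ⟨c, hc⟩ := hxne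
            obtain ⟨e, he, hex, _⟩ := mem_spectX.mp hc
            obtain ⟨heE, hes⟩ := Finset.mem_filter.mp he
            exact absurd (hdx e heE hex) (by omega)
          · have hspec : spectX Ehi (fun e => φ e - s) x = (spectX E φ x).image (· - s) := by
              apply Finset.ext; intro c
              rw [mem_spectX]
              simp only [Finset.mem_image]
              constructor
              · rintro ⟨e, he, hex, hec⟩
                exact ⟨φ e, mem_spectX.mpr ⟨e, (Finset.mem_filter.mp he).1, hex, rfl⟩, hec⟩
              · rintro ⟨c0, hc0, hcc⟩
                obtain ⟨e, he, hex, hec⟩ := mem_spectX.mp hc0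
                refine ⟨e, Finset.mem_filter.mpr ⟨he, ?_⟩, hex, by omega⟩
                have := hdx e he hex; omega
            rw [hspec] at hxne ⊢
            have hSne : (spectX E φ x).Nonempty := by
              obtain ⟨c, hc⟩ := hxne
              obtain ⟨c0, hc0, _⟩ := Finset.mem_image.mp hc
              exact ⟨c0, hc0⟩
            refine interval_image_sub s ?_ (hX x hSne)
            intro c hc
            obtain ⟨e, he, hex, hec⟩ := mem_spectX.mp hc
            have := hdx e he hex; omega
        by_cases hsplit : s < Elo.card
        · -- recurse on low part
          have hcardlt : Elo.card < n := by
            have : 0 < Ehi.card := Finset.card_pos.mpr hhi_ne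
            omega
          obtain ⟨ψlo, ⟨hψm, hψs, hψp⟩, hψX⟩ :=
            IH Elo.card hcardlt Elo s φ rfl hlo_col hlo_X hsplit
          have hψm' : ∀ e ∈ Elo, 1 ≤ ψlo e ∧ ψlo e ≤ s + 1 := by
            intro e he; have := hψm e he; simpa [Finset.mem_Icc] using this
          refine ⟨fun e => if φ e ≤ s then ψlo e else φ e + 1, ⟨?_, ?_, ?_⟩, ?_⟩
          · intro e he
            by_cases h : φ e ≤ s
            · have := hψm' e (Finset.mem_filter.mpr ⟨he, h⟩)
              simp only [if_pos h, Finset.mem_Icc]; omega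
            · have := hmem' e he
              simp only [if_neg h, Finset.mem_Icc]; omega
          · intro c hc
            simp only [Finset.mem_Icc] at hc
            by_cases h : c ≤ s + 1
            · obtain ⟨e, he, hec⟩ := hψs c (by simp [Finset.mem_Icc]; omega)
              obtain ⟨heE, hes⟩ := Finset.mem_filter.mp he
              refine ⟨e, heE, ?_⟩
              show (if φ e ≤ s then ψlo e else φ e + 1) = c
              rw [if_pos hes, hec]
            · obtain ⟨e, he, hec⟩ := hsurj (c - 1) (by simp [Finset.mem_Icc]; omega)
              refine ⟨e, he, ?_⟩
              show (if φ e ≤ s then ψlo e else φ e + 1) = c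
              rw [if_neg (by omega)]; omega
          · intro e he e' he' hnee hadj
            by_cases h : φ e ≤ s <;> by_cases h' : φ e' ≤ s <;>
              simp only [if_pos, if_neg, h, h', if_true, if_false]
            · exact hψp e (Finset.mem_filter.mpr ⟨he, h⟩) e' (Finset.mem_filter.mpr ⟨he', h'⟩)
                hnee hadj
            · have := hψm' e (Finset.mem_filter.mpr ⟨he, h⟩); omega
            · have := hψm' e' (Finset.mem_filter.mpr ⟨he', h'⟩); omega
            · have := hprop e he e' he' hnee hadj; omega
          · intro x hxne
            rcases D x with hdx | hdx
            · have hspec : spectX E (fun e => if φ e ≤ s then ψlo e else φ e + 1) x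
                  = spectX Elo ψlo x := by
                apply Finset.ext; intro c
                rw [mem_spectX, mem_spectX]
                constructor
                · rintro ⟨e, he, hex, hec⟩
                  refine ⟨e, Finset.mem_filter.mpr ⟨he, hdx e he hex⟩, hex, ?_⟩
                  rw [← hec]; simp [if_pos (hdx e he hex)]
                · rintro ⟨e, he, hex, hec⟩
                  obtain ⟨heE, hes⟩ := Finset.mem_filter.mp he
                  refine ⟨e, heE, hex, ?_⟩
                  show (if φ e ≤ s then ψlo e else φ e + 1) = c
                  rw [if_pos hes, hec]
              rw [hspec] at hxne ⊢
              exact hψX x hxne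
            · have hspec : spectX E (fun e => if φ e ≤ s then ψlo e else φ e + 1) x
                  = (spectX E φ x).image (· + 1) := by
                apply Finset.ext; intro c
                rw [mem_spectX]
                simp only [Finset.mem_image]
                constructor
                · rintro ⟨e, he, hex, hec⟩
                  refine ⟨φ e, mem_spectX.mpr ⟨e, he, hex, rfl⟩, ?_⟩
                  have hgt := hdx e he hex
                  rw [← hec]; simp [if_neg (by omega : ¬ φ e ≤ s)]
                · rintro ⟨c0, hc0, hcc⟩
                  obtain ⟨e, he, hex, hec⟩ := mem_spectX.mp hc0
                  refine ⟨e, he, hex, ?_⟩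
                  have hgt := hdx e he hex
                  show (if φ e ≤ s then ψlo e else φ e + 1) = c
                  rw [if_neg (by omega)]; omega
              rw [hspec] at hxne ⊢
              have hSne : (spectX E φ x).Nonempty := by
                obtain ⟨c, hc⟩ := hxne
                obtain ⟨c0, hc0, _⟩ := Finset.mem_image.mp hc
                exact ⟨c0, hc0⟩
              exact interval_image_add 1 (hX x hSne)
        · -- recurse on high part
          have hhisplit : t - s < Ehi.card := by omega
          have hcardlt : Ehi.card < n := by
            have : 0 < Elo.card := Finset.card_pos.mpr hlo_ne
            omega
          obtain ⟨ψhi, ⟨hψm, hψs, hψp⟩, hψX⟩ :=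
            IH Ehi.card hcardlt Ehi (t - s) (fun e => φ e - s) rfl hhi_col hhi_X hhisplit
          have hψm' : ∀ e ∈ Ehi, 1 ≤ ψhi e ∧ ψhi e ≤ t - s + 1 := by
            intro e he; have := hψm e he; simpa [Finset.mem_Icc] using this
          refine ⟨fun e => if φ e ≤ s then φ e else ψhi e + s, ⟨?_, ?_, ?_⟩, ?_⟩
          · intro e he
            by_cases h : φ e ≤ s
            · have := hmem' e he
              simp only [if_pos h, Finset.mem_Icc]; omega
            · have := hψm' e (Finset.mem_filter.mpr ⟨he, h⟩)
              simp only [if_neg h, Finset.mem_Icc]; omega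
          · intro c hc
            simp only [Finset.mem_Icc] at hc
            by_cases h : c ≤ s
            · obtain ⟨e, he, hec⟩ := hsurj c (by simp [Finset.mem_Icc]; omega)
              refine ⟨e, he, ?_⟩
              show (if φ e ≤ s then φ e else ψhi e + s) = c
              rw [if_pos (by omega), hec]
            · obtain ⟨e, he, hec⟩ := hψs (c - s) (by simp [Finset.mem_Icc]; omega)
              obtain ⟨heE, hes⟩ := Finset.mem_filter.mp he
              refine ⟨e, heE, ?_⟩
              show (if φ e ≤ s then φ e else ψhi e + s) = c
              rw [if_neg hes]; omega
          · intro e he e' he' hnee hadj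
            by_cases h : φ e ≤ s <;> by_cases h' : φ e' ≤ s <;>
              simp only [if_pos, if_neg, h, h', if_true, if_false]
            · exact hprop e he e' he' hnee hadj
            · have := hψm' e' (Finset.mem_filter.mpr ⟨he', h'⟩); omega
            · have := hψm' e (Finset.mem_filter.mpr ⟨he, h⟩); omega
            · have := hψp e (Finset.mem_filter.mpr ⟨he, h⟩) e' (Finset.mem_filter.mpr ⟨he', h'⟩)
                hnee hadj
              omega
          · intro x hxne
            rcases D x with hdx | hdx
            · have hspec : spectX E (fun e => if φ e ≤ s then φ e else ψhi e + s) x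
                  = spectX E φ x := by
                apply Finset.ext; intro c
                rw [mem_spectX, mem_spectX]
                constructor
                · rintro ⟨e, he, hex, hec⟩
                  refine ⟨e, he, hex, ?_⟩
                  rw [← hec]; simp [if_pos (hdx e he hex)]
                · rintro ⟨e, he, hex, hec⟩
                  refine ⟨e, he, hex, ?_⟩
                  show (if φ e ≤ s then φ e else ψhi e + s) = c
                  rw [if_pos (hdx e he hex), hec]
              rw [hspec] at hxne ⊢
              exact hX x hxne
            · have hspec : spectX E (fun e => if φ e ≤ s then φ e else ψhi e + s) x
                  = (spectX Ehi ψhi x).image (· + s) := by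
                apply Finset.ext; intro c
                rw [mem_spectX]
                simp only [Finset.mem_image]
                constructor
                · rintro ⟨e, he, hex, hec⟩
                  have hgt := hdx e he hex
                  refine ⟨ψhi e,
                    mem_spectX.mpr ⟨e, Finset.mem_filter.mpr ⟨he, by omega⟩, hex, rfl⟩, ?_⟩
                  rw [← hec]; simp [if_neg (by omega : ¬ φ e ≤ s)]
                · rintro ⟨c0, hc0, hcc⟩
                  obtain ⟨e, he, hex, hec⟩ := mem_spectX.mp hc0
                  obtain ⟨heE, hes⟩ := Finset.mem_filter.mp he
                  refine ⟨e, heE, hex, ?_⟩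
                  show (if φ e ≤ s then φ e else ψhi e + s) = c
                  rw [if_neg hes]; omega
              rw [hspec] at hxne ⊢
              have hSne : (spectX Ehi ψhi x).Nonempty := by
                obtain ⟨c, hc⟩ := hxne
                obtain ⟨c0, hc0, _⟩ := Finset.mem_image.mp hc
                exact ⟨c0, hc0⟩
              exact interval_image_add s (hψX x hSne)
      · -- CASE 3: unique top vertex with full spectrum
        have ht2 : 2 ≤ t := by
          by_contra ht2
          have ht1' : t = 1 := by omega
          obtain ⟨a, ha, b, hb, hab⟩ := Finset.one_lt_card.mp (by omega : 1 < E.card)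
          have ha1 : φ a = 1 := by have := hmem' a ha; omega
          have hb1 : φ b = 1 := by have := hmem' b hb; omega
          by_cases hv : b.1 = a.1
          · exact hprop b hb a ha (Ne.symm hab) (Or.inl hv) (by rw [hb1, ha1])
          · exact hC1 ⟨a, ha, b, hb, hv, by rw [ha1, hb1],
              ⟨a, ha, rfl, by omega⟩, fun e he _ => by have := hmem' e he; omega⟩
        obtain ⟨et, hetE, hett⟩ := hsurj t (by simp [Finset.mem_Icc, ht1])
        set v := et.1 with hv
        have htS : t ∈ spectX E φ v := mem_spectX.mpr ⟨et, hetE, rfl, hett⟩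
        have hSvne : (spectX E φ v).Nonempty := ⟨t, htS⟩
        -- 1 belongs to the spectrum of v
        have h1v : (1 : ℕ) ∈ spectX E φ v := by
          by_contra h1v
          set L := (spectX E φ v).min' hSvne with hL
          have hLmem : L ∈ spectX E φ v := (spectX E φ v).min'_mem hSvne
          obtain ⟨ebL, hebLE, hebLv, hebLL⟩ := mem_spectX.mp hLmem
          have hLbd : 1 ≤ L ∧ L ≤ t := by rw [← hebLL]; exact hmem' ebL hebLE
          have hL2 : 2 ≤ L := by
            rcases Nat.lt_or_ge L 2 with h | h
            · exfalso; have : L = 1 := by omega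
              exact h1v (this ▸ hLmem)
            · exact h
          have hLrep : ∀ e ∈ E, φ e = L → e.1 = v := by
            intro e he heL
            by_contra hx
            exact hC1 ⟨ebL, hebLE, e, he, by rw [hebLv]; exact hx,
              by rw [heL, hebLL],
              ⟨et, hetE, by rw [hebLv], hett⟩,
              fun e' he' hev' => by
                rw [hebLL]
                exact (spectX E φ v).min'_le _
                  (mem_spectX.mpr ⟨e', he', hev'.trans hebLv, rfl⟩)⟩
          refine hC2 ⟨L - 1, by omega, by omega, ?_⟩
          rintro x ⟨hA, hB⟩
          obtain ⟨e, he, hex, heL⟩ := mem_spectX.mp hB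
          have heL' : φ e = L := by omega
          have hxv : x = v := by rw [← hex]; exact hLrep e he heL'
          rw [hxv] at hA
          have := (spectX E φ v).min'_le _ hA
          omega
        have hfull : ∀ c, 1 ≤ c → c ≤ t → c ∈ spectX E φ v :=
          fun c h1 h2 => (hX v hSvne).2 1 h1v t htS c h1 h2
        obtain ⟨eone, heoneE, heonev, heone1⟩ := mem_spectX.mp h1v
        have huniq1 : ∀ e ∈ E, φ e = 1 → e.1 = v := by
          intro e he he1
          by_contra hx
          exact hC1 ⟨eone, heoneE, e, he, by rw [heonev]; exact hx,
            by rw [he1, heone1],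
            ⟨et, hetE, by rw [heonev], hett⟩,
            fun e' he' _ => by rw [heone1]; exact (hmem' e' he').1⟩
        have huniq1' : ∀ e ∈ E, φ e = 1 → e = eone := by
          intro e he he1
          by_contra hne
          exact hprop e he eone heoneE hne
            (Or.inl (by rw [huniq1 e he he1, heonev])) (by rw [he1, heone1])
        set E' := E.erase eone with hE'
        set φ' := fun e : α × β => φ e - 1 with hφ'
        have hmemE' : ∀ e, e ∈ E' ↔ e ≠ eone ∧ e ∈ E := fun e => Finset.mem_erase
        have hge2 : ∀ e ∈ E', 2 ≤ φ e := by
          intro e he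
          obtain ⟨hne, heE⟩ := (hmemE' e).mp he
          have h1 := (hmem' e heE).1
          rcases Nat.lt_or_ge (φ e) 2 with h | h
          · exfalso; exact hne (huniq1' e heE (by omega))
          · exact h
        have hE'col : IsProperEdgeColoring E' (t - 1) φ' := by
          refine ⟨?_, ?_, ?_⟩
          · intro e he
            obtain ⟨hne, heE⟩ := (hmemE' e).mp he
            have := hmem' e heE
            have := hge2 e he
            simp only [Finset.mem_Icc]
            show 1 ≤ φ e - 1 ∧ φ e - 1 ≤ t - 1
            omega
          · intro c hc
            simp only [Finset.mem_Icc] at hc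
            obtain ⟨e, he, hec⟩ := hsurj (c + 1) (by simp [Finset.mem_Icc]; omega)
            have hne : e ≠ eone := by
              intro h; rw [h, heone1] at hec; omega
            refine ⟨e, (hmemE' e).mpr ⟨hne, he⟩, ?_⟩
            show φ e - 1 = c
            omega
          · intro e he e' he' hnee hadj
            obtain ⟨hne, heE⟩ := (hmemE' e).mp he
            obtain ⟨hne', heE'⟩ := (hmemE' e').mp he'
            have := hprop e heE e' heE' hnee hadj
            have := hge2 e he
            have := hge2 e' he'
            show φ e - 1 ≠ φ e' - 1
            omega
        have hE'X : IntervalOnX E' φ' := by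
          intro x hxne
          have hspec : spectX E' φ' x = ((spectX E φ x).erase 1).image (· - 1) := by
            apply Finset.ext; intro c
            rw [mem_spectX]
            simp only [Finset.mem_image, Finset.mem_erase]
            constructor
            · rintro ⟨e, he, hex, hec⟩
              obtain ⟨hne, heE⟩ := (hmemE' e).mp he
              have h2 := hge2 e he
              exact ⟨φ e, ⟨by omega, mem_spectX.mpr ⟨e, heE, hex, rfl⟩⟩, hec⟩
            · rintro ⟨c0, ⟨hc0ne, hc0⟩, hcc⟩
              obtain ⟨e, he, hex, hec⟩ := mem_spectX.mp hc0
              have hne : e ≠ eone := by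
                intro h; rw [h, heone1] at hec; exact hc0ne hec.symm
              refine ⟨e, (hmemE' e).mpr ⟨hne, he⟩, hex, ?_⟩
              show φ e - 1 = c
              omega
          rw [hspec] at hxne ⊢
          obtain ⟨c, hc⟩ := hxne
          obtain ⟨c0, hc0, _⟩ := Finset.mem_image.mp hc
          have hTne : ((spectX E φ x).erase 1).Nonempty := ⟨c0, hc0⟩
          have hSne : (spectX E φ x).Nonempty :=
            ⟨c0, (Finset.mem_erase.mp hc0).2⟩
          have hSint := hX x hSne
          have hTint : IsIntervalFinset ((spectX E φ x).erase 1) := by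
            refine ⟨hTne, ?_⟩
            intro a ha b hb c' hac hcb
            obtain ⟨hane, haS⟩ := Finset.mem_erase.mp ha
            obtain ⟨hbne, hbS⟩ := Finset.mem_erase.mp hb
            have ha1 : 1 ≤ a := by
              obtain ⟨e, he, _, hec⟩ := mem_spectX.mp haS
              have := hmem' e he; omega
            refine Finset.mem_erase.mpr ⟨by omega, hSint.2 a haS b hbS c' hac hcb⟩
          refine interval_image_sub 1 ?_ hTint
          intro c' hc'
          obtain ⟨hcne, hcS⟩ := Finset.mem_erase.mp hc'
          obtain ⟨e, he, _, hec⟩ := mem_spectX.mp hcS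
          have := hmem' e he; omega
        have hcard' : E'.card = n - 1 := by
          rw [hE', Finset.card_erase_of_mem heoneE, hn]
        have hn1 : 1 ≤ n := by omega
        obtain ⟨ψ', hψ'col, hψ'X⟩ :=
          IH (n - 1) (by omega) E' (t - 1) φ' hcard' hE'col hE'X (by omega)
        have htt : t - 1 + 1 = t := by omega
        rw [htt] at hψ'col
        obtain ⟨hψm, hψs, hψp⟩ := hψ'col
        have hψm' : ∀ e ∈ E', 1 ≤ ψ' e ∧ ψ' e ≤ t := by
          intro e he; have := hψm e he; simpa [Finset.mem_Icc] using this
        set S' := spectX E' ψ' v with hS'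
        have hS'ne : S'.Nonempty := by
          obtain ⟨e₂, he₂E, he₂v, he₂2⟩ := mem_spectX.mp (hfull 2 (by omega) ht2)
          have hne : e₂ ≠ eone := by
            intro h; rw [h, heone1] at he₂2; omega
          exact ⟨ψ' e₂, mem_spectX.mpr ⟨e₂, (hmemE' e₂).mpr ⟨hne, he₂E⟩, he₂v, rfl⟩⟩
        -- cardinality of S'
        have hSvIcc : spectX E φ v = Finset.Icc 1 t := by
          apply Finset.ext; intro c
          simp only [Finset.mem_Icc]
          constructor
          · intro hc
            obtain ⟨e, he, _, hec⟩ := mem_spectX.mp hc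
            rw [← hec]; exact hmem' e he
          · rintro ⟨h1, h2⟩; exact hfull c h1 h2
        have hcard1 : (E.filter fun e => e.1 = v).card = t := by
          have hinj : Set.InjOn φ ↑(E.filter fun e => e.1 = v) := by
            intro e he e' he' heq'
            simp only [Finset.coe_filter, Set.mem_setOf_eq] at he he'
            by_contra hne
            exact hprop e he.1 e' he'.1 hne (Or.inl (by rw [he.2, he'.2])) heq'
          have himg : (E.filter fun e => e.1 = v).image φ = spectX E φ v := rfl
          have := Finset.card_image_of_injOn hinj
          rw [himg, hSvIcc, Nat.card_Icc] at this
          omega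
        have hfilt' : E'.filter (fun e => e.1 = v)
            = (E.filter fun e => e.1 = v).erase eone := by
          apply Finset.ext; intro e
          simp only [Finset.mem_filter, Finset.mem_erase, hE']
          tauto
        have hcard2 : (E'.filter fun e => e.1 = v).card = t - 1 := by
          rw [hfilt', Finset.card_erase_of_mem
            (Finset.mem_filter.mpr ⟨heoneE, heonev⟩), hcard1]
        have hcardS' : S'.card = t - 1 := by
          have hinj : Set.InjOn ψ' ↑(E'.filter fun e => e.1 = v) := by
            intro e he e' he' heq'
            simp only [Finset.coe_filter, Set.mem_setOf_eq] at he he'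
            by_contra hne
            exact hψp e he.1 e' he'.1 hne (Or.inl (by rw [he.2, he'.2])) heq'
          have himg : (E'.filter fun e => e.1 = v).image ψ' = S' := rfl
          have := Finset.card_image_of_injOn hinj
          rw [himg, hcard2] at this
          omega
        have hS'int := hψ'X v hS'ne
        have hS'sub : ∀ u ∈ S', 1 ≤ u ∧ u ≤ t := by
          intro u hu
          obtain ⟨e, he, _, hec⟩ := mem_spectX.mp hu
          rw [← hec]; exact hψm' e he
        set m' := S'.min' hS'ne with hm'def
        set M' := S'.max' hS'ne with hM'def
        have hm'mem : m' ∈ S' := S'.min'_mem hS'ne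
        have hM'mem : M' ∈ S' := S'.max'_mem hS'ne
        have hmM : m' ≤ M' := Finset.min'_le _ _ hM'mem
        have hcardIcc : S'.card = M' + 1 - m' := by
          conv_lhs => rw [hS', interval_eq_Icc hS'int]
          exact Nat.card_Icc _ _
        have hm'bd := hS'sub m' hm'mem
        have hM'bd := hS'sub M' hM'mem
        have hm'cases : m' = 1 ∨ m' = 2 := by omega
        rcases hm'cases with hm1 | hm2
        · -- v sits at the bottom: reinsert eone with color 1, shift the rest up
          have h1S' : (1 : ℕ) ∈ S' := hm1 ▸ hm'mem
          refine ⟨fun e => if e = eone then 1 else ψ' e + 1, ⟨?_, ?_, ?_⟩, ?_⟩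
          · intro e he
            by_cases h : e = eone
            · simp [h, Finset.mem_Icc]
            · have := hψm' e ((hmemE' e).mpr ⟨h, he⟩)
              simp only [if_neg h, Finset.mem_Icc]; omega
          · intro c hc
            simp only [Finset.mem_Icc] at hc
            by_cases h : c = 1
            · exact ⟨eone, heoneE, by simp [h]⟩
            · obtain ⟨e, he, hec⟩ := hψs (c - 1) (by simp [Finset.mem_Icc]; omega)
              obtain ⟨hne, heE⟩ := (hmemE' e).mp he
              refine ⟨e, heE, ?_⟩
              show (if e = eone then 1 else ψ' e + 1) = c
              rw [if_neg hne]; omega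
          · intro e he e' he' hnee hadj
            by_cases h : e = eone <;> by_cases h' : e' = eone
            · exact absurd (h.trans h'.symm) hnee
            · have := hψm' e' ((hmemE' e').mpr ⟨h', he'⟩)
              simp only [if_pos h, if_neg h']; omega
            · have := hψm' e ((hmemE' e).mpr ⟨h, he⟩)
              simp only [if_neg h, if_pos h']; omega
            · simp only [if_neg h, if_neg h']
              have := hψp e ((hmemE' e).mpr ⟨h, he⟩) e' ((hmemE' e').mpr ⟨h', he'⟩)
                hnee hadj
              omega
          · intro x hxne
            by_cases hxv : x = v
            · subst hxv
              have hspec : spectX E (fun e => if e = eone then 1 else ψ' e + 1) v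
                  = insert 1 (S'.image (· + 1)) := by
                apply Finset.ext; intro c
                rw [mem_spectX]
                simp only [Finset.mem_insert, Finset.mem_image]
                constructor
                · rintro ⟨e, he, hex, hec⟩
                  by_cases h : e = eone
                  · left; rw [← hec, if_pos h]
                  · right
                    refine ⟨ψ' e, mem_spectX.mpr ⟨e, (hmemE' e).mpr ⟨h, he⟩, hex, rfl⟩, ?_⟩
                    rw [← hec, if_neg h]
                · rintro (rfl | ⟨c0, hc0, hcc⟩)
                  · exact ⟨eone, heoneE, heonev, by simp⟩
                  · obtain ⟨e, he, hex, hec⟩ := mem_spectX.mp hc0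
                    obtain ⟨hne, heE⟩ := (hmemE' e).mp he
                    refine ⟨e, heE, hex, ?_⟩
                    show (if e = eone then 1 else ψ' e + 1) = c
                    rw [if_neg hne]; omega
              rw [hspec] at hxne ⊢
              refine ⟨hxne, ?_⟩
              intro a ha b hb c hac hcb
              simp only [Finset.mem_insert, Finset.mem_image] at ha hb ⊢
              by_cases hc : c = 1
              · exact Or.inl hc
              · right
                have hage : 1 ≤ a := by
                  rcases ha with rfl | ⟨a0, ha0, haa⟩
                  · omega
                  · have := (hS'sub a0 ha0).1; omega
                rcases hb with rfl | ⟨b0, hb0, hbb⟩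
                · exfalso
                  rcases ha with rfl | ⟨a0, ha0, haa⟩
                  · omega
                  · have := (hS'sub a0 ha0).1; omega
                · refine ⟨c - 1, hS'int.2 1 h1S' b0 hb0 (c - 1) (by omega) (by omega),
                    by omega⟩
            · have hspec : spectX E (fun e => if e = eone then 1 else ψ' e + 1) x
                  = (spectX E' ψ' x).image (· + 1) := by
                apply Finset.ext; intro c
                rw [mem_spectX]
                simp only [Finset.mem_image]
                constructor
                · rintro ⟨e, he, hex, hec⟩
                  have hne : e ≠ eone := by
                    intro h; rw [h, heonev] at hex; exact hxv hex.symm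
                  refine ⟨ψ' e, mem_spectX.mpr ⟨e, (hmemE' e).mpr ⟨hne, he⟩, hex, rfl⟩, ?_⟩
                  rw [← hec, if_neg hne]
                · rintro ⟨c0, hc0, hcc⟩
                  obtain ⟨e, he, hex, hec⟩ := mem_spectX.mp hc0
                  obtain ⟨hne, heE⟩ := (hmemE' e).mp he
                  refine ⟨e, heE, hex, ?_⟩
                  show (if e = eone then 1 else ψ' e + 1) = c
                  rw [if_neg hne]; omega
              rw [hspec] at hxne ⊢
              have hSne : (spectX E' ψ' x).Nonempty := by
                obtain ⟨c, hc⟩ := hxne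
                obtain ⟨c0, hc0, _⟩ := Finset.mem_image.mp hc
                exact ⟨c0, hc0⟩
              exact interval_image_add 1 (hψ'X x hSne)
        · -- v sits at the top: reinsert eone with color t + 1
          have hM't : M' = t := by omega
          have htS' : t ∈ S' := hM't ▸ hM'mem
          refine ⟨fun e => if e = eone then t + 1 else ψ' e, ⟨?_, ?_, ?_⟩, ?_⟩
          · intro e he
            by_cases h : e = eone
            · simp [h, Finset.mem_Icc]
            · have := hψm' e ((hmemE' e).mpr ⟨h, he⟩)
              simp only [if_neg h, Finset.mem_Icc]; omega
          · intro c hc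
            simp only [Finset.mem_Icc] at hc
            by_cases h : c ≤ t
            · obtain ⟨e, he, hec⟩ := hψs c (by simp [Finset.mem_Icc]; omega)
              obtain ⟨hne, heE⟩ := (hmemE' e).mp he
              refine ⟨e, heE, ?_⟩
              show (if e = eone then t + 1 else ψ' e) = c
              rw [if_neg hne, hec]
            · refine ⟨eone, heoneE, ?_⟩
              show (if eone = eone then t + 1 else ψ' eone) = c
              rw [if_pos rfl]; omega
          · intro e he e' he' hnee hadj
            by_cases h : e = eone <;> by_cases h' : e' = eone
            · exact absurd (h.trans h'.symm) hnee
            · have := hψm' e' ((hmemE' e').mpr ⟨h', he'⟩)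
              simp only [if_pos h, if_neg h']; omega
            · have := hψm' e ((hmemE' e).mpr ⟨h, he⟩)
              simp only [if_neg h, if_pos h']; omega
            · simp only [if_neg h, if_neg h']
              exact hψp e ((hmemE' e).mpr ⟨h, he⟩) e' ((hmemE' e').mpr ⟨h', he'⟩)
                hnee hadj
          · intro x hxne
            by_cases hxv : x = v
            · subst hxv
              have hspec : spectX E (fun e => if e = eone then t + 1 else ψ' e) v
                  = insert (t + 1) S' := by
                apply Finset.ext; intro c
                rw [mem_spectX]
                simp only [Finset.mem_insert]
                constructor
                · rintro ⟨e, he, hex, hec⟩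
                  by_cases h : e = eone
                  · left; rw [← hec, if_pos h]
                  · right
                    exact mem_spectX.mpr ⟨e, (hmemE' e).mpr ⟨h, he⟩, hex, by rw [← hec, if_neg h]⟩
                · rintro (rfl | hcS)
                  · exact ⟨eone, heoneE, heonev, by simp⟩
                  · obtain ⟨e, he, hex, hec⟩ := mem_spectX.mp hcS
                    obtain ⟨hne, heE⟩ := (hmemE' e).mp he
                    refine ⟨e, heE, hex, ?_⟩
                    show (if e = eone then t + 1 else ψ' e) = c
                    rw [if_neg hne, hec]
              rw [hspec] at hxne ⊢
              refine ⟨hxne, ?_⟩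
              intro a ha b hb c hac hcb
              simp only [Finset.mem_insert] at ha hb ⊢
              by_cases hc : c = t + 1
              · exact Or.inl hc
              · right
                have hcb' : c ≤ t := by
                  rcases hb with rfl | hbS
                  · omega
                  · have := (hS'sub b hbS).2; omega
                rcases ha with rfl | haS
                · omega
                · exact hS'int.2 a haS t htS' c hac hcb'
            · have hspec : spectX E (fun e => if e = eone then t + 1 else ψ' e) x
                  = spectX E' ψ' x := by
                apply Finset.ext; intro c
                rw [mem_spectX, mem_spectX]
                constructor
                · rintro ⟨e, he, hex, hec⟩
                  have hne : e ≠ eone := by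
                    intro h; rw [h, heonev] at hex; exact hxv hex.symm
                  exact ⟨e, (hmemE' e).mpr ⟨hne, he⟩, hex, by rw [← hec, if_neg hne]⟩
                · rintro ⟨e, he, hex, hec⟩
                  obtain ⟨hne, heE⟩ := (hmemE' e).mp he
                  refine ⟨e, heE, hex, ?_⟩
                  show (if e = eone then t + 1 else ψ' e) = c
                  rw [if_neg hne, hec]
              rw [hspec] at hxne ⊢
              exact hψ'X x hxne

lemma interpX (E : Finset (α × β)) (w t : ℕ)
    (h : ∃ φ : α × β → ℕ, IsProperEdgeColoring E w φ ∧ IntervalOnX E φ)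
    (hwt : w ≤ t) (ht : t ≤ E.card) :
    ∃ φ : α × β → ℕ, IsProperEdgeColoring E t φ ∧ IntervalOnX E φ := by
  revert ht
  induction t, hwt using Nat.le_induction with
  | base => intro _; exact h
  | succ t hwt' IH =>
    intro ht
    obtain ⟨φ, hc, hXc⟩ := IH (by omega)
    exact step E.card E t φ rfl hc hXc (by omega)

lemma mem_spectY {E : Finset (α × β)} {φ : α × β → ℕ} {y : β} {c : ℕ} :
    c ∈ spectY E φ y ↔ ∃ e, e ∈ E ∧ e.2 = y ∧ φ e = c := by
  unfold spectY
  simp only [Finset.mem_image, Finset.mem_filter]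
  constructor
  · rintro ⟨e, ⟨he, hey⟩, hc⟩; exact ⟨e, he, hey, hc⟩
  · rintro ⟨e, he, hey, hc⟩; exact ⟨e, ⟨he, hey⟩, hc⟩

lemma swap_mem {E : Finset (α × β)} {e : β × α} :
    e ∈ E.image Prod.swap ↔ e.swap ∈ E := by
  simp only [Finset.mem_image]
  constructor
  · rintro ⟨a, ha, rfl⟩; simpa using ha
  · intro h; exact ⟨e.swap, h, by simp⟩

lemma proper_swap {E : Finset (α × β)} {t : ℕ} {φ : α × β → ℕ}
    (h : IsProperEdgeColoring E t φ) :
    IsProperEdgeColoring (E.image Prod.swap) t (fun e => φ e.swap) := by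
  obtain ⟨h1, h2, h3⟩ := h
  refine ⟨?_, ?_, ?_⟩
  · intro e he
    exact h1 e.swap (swap_mem.mp he)
  · intro c hc
    obtain ⟨e, he, hec⟩ := h2 c hc
    refine ⟨e.swap, swap_mem.mpr (by simpa), ?_⟩
    show φ e.swap.swap = c
    simpa
  · intro e he e' he' hne hadj
    refine h3 e.swap (swap_mem.mp he) e'.swap (swap_mem.mp he') ?_ ?_
    · intro hh
      exact hne (by rw [← Prod.swap_swap e, hh, Prod.swap_swap])
    · rcases hadj with h | h
      · exact Or.inr (by simpa using h)
      · exact Or.inl (by simpa using h)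

lemma spectY_swap (E : Finset (α × β)) (φ : α × β → ℕ) (y : β) :
    spectY E φ y = spectX (E.image Prod.swap) (fun e => φ e.swap) y := by
  apply Finset.ext; intro c
  rw [mem_spectY, mem_spectX]
  constructor
  · rintro ⟨e, he, hey, hec⟩
    refine ⟨e.swap, swap_mem.mpr (by simpa), by simpa, ?_⟩
    show φ e.swap.swap = c
    simpa
  · rintro ⟨e, he, hey, hec⟩
    exact ⟨e.swap, swap_mem.mp he, by simpa using hey, hec⟩


end Stmt6Helpers

/-- If `R` is one part of a bipartite graph, `w_R(G)` its minimum
number of colors of a proper edge coloring interval on `R`, and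
`w_R(G) ≤ t ≤ |E|`, then there is a proper edge `t`-coloring interval on `R`
(stated simultaneously for `R = X` and `R = Y`). -/
theorem stmt6 {α β : Type*} [Fintype α] [Fintype β] [DecidableEq α] [DecidableEq β]
    (E : Finset (α × β)) (t wX wY : ℕ)
    (hwX : (∃ φ : α × β → ℕ, IsProperEdgeColoring E wX φ ∧ IntervalOnX E φ) ∧
      ∀ w', (∃ φ : α × β → ℕ, IsProperEdgeColoring E w' φ ∧ IntervalOnX E φ) → wX ≤ w')
    (hwY : (∃ φ : α × β → ℕ, IsProperEdgeColoring E wY φ ∧ IntervalOnY E φ) ∧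
      ∀ w', (∃ φ : α × β → ℕ, IsProperEdgeColoring E w' φ ∧ IntervalOnY E φ) → wY ≤ w') :
    (wX ≤ t → t ≤ E.card → ∃ φ : α × β → ℕ, IsProperEdgeColoring E t φ ∧ IntervalOnX E φ) ∧
    (wY ≤ t → t ≤ E.card → ∃ φ : α × β → ℕ, IsProperEdgeColoring E t φ ∧ IntervalOnY E φ) := by
  constructor
  · intro hwt htE
    exact interpX E wX t hwX.1 hwt htE
  · intro hwt htE
    obtain ⟨φ₀, hc₀, hY₀⟩ := hwY.1
    have hX₀ : IntervalOnX (E.image Prod.swap) (fun e => φ₀ e.swap) := by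
      intro y hy
      rw [← spectY_swap] at hy ⊢
      exact hY₀ y hy
    have hcard : (E.image Prod.swap).card = E.card :=
      Finset.card_image_of_injective _ Prod.swap_injective
    obtain ⟨ψ, hψc, hψX⟩ := interpX (E.image Prod.swap) wY t
      ⟨fun e => φ₀ e.swap, proper_swap hc₀, hX₀⟩ hwt (by rw [hcard]; exact htE)
    refine ⟨fun e => ψ e.swap, ?_, ?_⟩
    · have h := proper_swap hψc
      have hEE : (E.image Prod.swap).image Prod.swap = E := by
        rw [Finset.image_image, Prod.swap_swap_eq, Finset.image_id]
      rw [hEE] at h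
      exact h
    · intro y hy
      have hs : spectY E (fun e => ψ e.swap) y = spectX (E.image Prod.swap) ψ y := by
        apply Finset.ext; intro c
        rw [mem_spectY, mem_spectX]
        constructor
        · rintro ⟨e, he, hey, hec⟩
          exact ⟨e.swap, swap_mem.mpr (by simpa), by simpa, hec⟩
        · rintro ⟨e, he, hey, hec⟩
          refine ⟨e.swap, swap_mem.mp he, by simpa using hey, ?_⟩
          show ψ e.swap.swap = c
          simpa
      rw [hs] at hy ⊢
      exact hψX y hy
end

section
/- Let G be a bipartite graph with parts X of size m and Y of size n, with every vertex of X of degree l and every vertex of Y of degree k (m ≥ n, ml = nk). Then w_Y(G) = k, i.e., there is a proper edge k-coloring of G interval on Y and no proper edge coloring interval on Y uses fewer than k colors. -/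
open Finset

lemma flip_lemma {α β : Type*} (E' : Finset (α × β)) (φ : α × β → ℕ)
    (a b : ℕ) (hab : a ≠ b) (x0 : α) (y0 : β)
    (hprop : ∀ e ∈ E', ∀ e' ∈ E', e ≠ e' → (e.1 = e'.1 ∨ e.2 = e'.2) → φ e ≠ φ e')
    (hx0 : ∀ e ∈ E', e.1 = x0 → φ e ≠ a)
    (hy0 : ∀ e ∈ E', e.2 = y0 → φ e ≠ b) :
    ∃ ψ : α × β → ℕ,
      (∀ e ∈ E', ψ e = φ e ∨ ψ e = a ∨ ψ e = b) ∧
      (∀ e ∈ E', ∀ e' ∈ E', e ≠ e' → (e.1 = e'.1 ∨ e.2 = e'.2) → ψ e ≠ ψ e') ∧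
      (∀ e ∈ E', e.1 = x0 → ψ e ≠ a) ∧
      (∀ e ∈ E', e.2 = y0 → ψ e ≠ a) := by
  classical
  set step : β → β → Prop := fun y y' => ∃ x : α,
      ((x, y) ∈ E' ∧ φ (x, y) = a) ∧ ((x, y') ∈ E' ∧ φ (x, y') = b) with hstepdef
  set R : Set β := {y | Relation.ReflTransGen step y0 y} with hRdef
  set Xs : Set α := {x | ∃ y ∈ R, (x, y) ∈ E' ∧ φ (x, y) = a} with hXsdef
  -- closure lemmas
  have L3' : ∀ x y, (x, y) ∈ E' → φ (x, y) = a → y ∈ R → x ∈ Xs := by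
    intro x y he hφ hy; exact ⟨y, hy, he, hφ⟩
  have L1 : ∀ x y, (x, y) ∈ E' → φ (x, y) = b → y ∈ R → x ∈ Xs := by
    intro x y he hφ hy
    rcases Relation.ReflTransGen.cases_tail hy with rfl | ⟨c, hc, x', ⟨ha1, ha2⟩, hb1, hb2⟩
    · exact absurd hφ (hy0 _ he rfl)
    · have hx' : x' = x := by
        by_contra hne
        exact hprop _ hb1 _ he (by simp [Prod.ext_iff, hne]) (Or.inr rfl) (hb2.trans hφ.symm)
      exact ⟨c, hc, hx' ▸ ha1, hx' ▸ ha2⟩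
  have L2 : ∀ x y, x ∈ Xs → (x, y) ∈ E' → φ (x, y) = b → y ∈ R := by
    intro x y hx he hφ
    obtain ⟨y', hy', he', hφ'⟩ := hx
    exact hy'.tail ⟨x, ⟨he', hφ'⟩, he, hφ⟩
  have L3 : ∀ x y, x ∈ Xs → (x, y) ∈ E' → φ (x, y) = a → y ∈ R := by
    intro x y hx he hφ
    obtain ⟨y', hy', he', hφ'⟩ := hx
    have : y = y' := by
      by_contra hne
      exact hprop _ he _ he' (by simp [Prod.ext_iff, hne]) (Or.inl rfl) (hφ.trans hφ'.symm)
    exact this ▸ hy'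
  set ψ : α × β → ℕ := fun e => if φ e = a ∧ e ∈ E' ∧ e.2 ∈ R then b
      else if φ e = b ∧ e ∈ E' ∧ e.1 ∈ Xs then a else φ e with hψdef
  have hvals : ∀ e, ψ e = φ e ∨ ψ e = a ∨ ψ e = b := by
    intro e; simp only [hψdef]; split_ifs <;> tauto
  have hcharA : ∀ e ∈ E', (ψ e = a ↔ ((φ e = a ∧ e.2 ∉ R) ∨ (φ e = b ∧ e.1 ∈ Xs))) := by
    intro e he
    have hcontra : ¬(φ e = a ∧ φ e = b) := fun ⟨h3, h4⟩ => hab (h3.symm.trans h4)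
    simp only [hψdef]
    split_ifs with h1 h2 <;> constructor <;> intro h <;> tauto
  have hcharB : ∀ e ∈ E', (ψ e = b ↔ ((φ e = a ∧ e.2 ∈ R) ∨ (φ e = b ∧ e.1 ∉ Xs))) := by
    intro e he
    have hcontra : ¬(φ e = a ∧ φ e = b) := fun ⟨h3, h4⟩ => hab (h3.symm.trans h4)
    simp only [hψdef]
    split_ifs with h1 h2 <;> constructor <;> intro h <;> tauto
  refine ⟨ψ, fun e _ => hvals e, ?_, ?_, ?_⟩
  · -- properness
    intro e he e' he' hne hshare heq
    by_cases ha : ψ e = a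
    · have ha' : ψ e' = a := heq ▸ ha
      rcases (hcharA e he).1 ha with ⟨h1, h2⟩ | ⟨h1, h2⟩ <;>
        rcases (hcharA e' he').1 ha' with ⟨h1', h2'⟩ | ⟨h1', h2'⟩
      · exact hprop e he e' he' hne hshare (h1.trans h1'.symm)
      · rcases hshare with hs | hs
        · exact h2 (L3 e.1 e.2 (hs ▸ h2') (by simpa using he) h1)
        · exact h2 (hs ▸ L2 e'.1 e'.2 h2' (by simpa using he') h1')
      · rcases hshare with hs | hs
        · exact h2' (L3 e'.1 e'.2 (hs ▸ h2) (by simpa using he') h1')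
        · exact h2' (hs ▸ L2 e.1 e.2 h2 (by simpa using he) h1)
      · exact hprop e he e' he' hne hshare (h1.trans h1'.symm)
    · by_cases hb : ψ e = b
      · have hb' : ψ e' = b := heq ▸ hb
        rcases (hcharB e he).1 hb with ⟨h1, h2⟩ | ⟨h1, h2⟩ <;>
          rcases (hcharB e' he').1 hb' with ⟨h1', h2'⟩ | ⟨h1', h2'⟩
        · exact hprop e he e' he' hne hshare (h1.trans h1'.symm)
        · rcases hshare with hs | hs
          · exact h2' (hs ▸ L3' e.1 e.2 (by simpa using he) h1 h2)
          · exact h2' (L1 e'.1 e'.2 (by simpa using he') h1' (hs ▸ h2))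
        · rcases hshare with hs | hs
          · exact h2 (hs ▸ L3' e'.1 e'.2 (by simpa using he') h1' h2')
          · exact h2 (L1 e.1 e.2 (by simpa using he) h1 (hs ▸ h2'))
        · exact hprop e he e' he' hne hshare (h1.trans h1'.symm)
      · have he1 : ψ e = φ e := (hvals e).resolve_right (by tauto)
        have ha' : ψ e' ≠ a := heq ▸ ha
        have hb' : ψ e' ≠ b := heq ▸ hb
        have he2 : ψ e' = φ e' := (hvals e').resolve_right (by tauto)
        exact hprop e he e' he' hne hshare (by rw [← he1, ← he2]; exact heq)
  · intro e he hx hval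
    rcases (hcharA e he).1 hval with ⟨h1, _⟩ | ⟨_, h2⟩
    · exact hx0 e he hx h1
    · obtain ⟨y', hy', he', hφ'⟩ := h2
      exact hx0 _ he' (by simpa using hx) hφ'
  · intro e he hy hval
    rcases (hcharA e he).1 hval with ⟨h1, h2⟩ | ⟨h1, _⟩
    · exact h2 (hy ▸ Relation.ReflTransGen.refl)
    · exact hy0 e he hy h1

lemma exists_col {α β : Type*} [DecidableEq α] [DecidableEq β] (k : ℕ) :
    ∀ E : Finset (α × β), (∀ x, degX E x ≤ k) → (∀ y, degY E y ≤ k) →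
    ∃ φ : α × β → ℕ, (∀ e ∈ E, φ e ∈ Finset.Icc 1 k) ∧
      (∀ e ∈ E, ∀ e' ∈ E, e ≠ e' → (e.1 = e'.1 ∨ e.2 = e'.2) → φ e ≠ φ e') := by
  classical
  intro E
  induction E using Finset.strongInduction with
  | _ E ih =>
    intro hX hY
    rcases E.eq_empty_or_nonempty with rfl | ⟨e0, he0⟩
    · exact ⟨fun _ => 1, by simp, by simp⟩
    set E' := E.erase e0 with hE'def
    have hsub : E' ⊆ E := Finset.erase_subset _ _
    have hX' : ∀ x, degX E' x ≤ k := fun x =>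
      le_trans (Finset.card_le_card (Finset.filter_subset_filter _ hsub)) (hX x)
    have hY' : ∀ y, degY E' y ≤ k := fun y =>
      le_trans (Finset.card_le_card (Finset.filter_subset_filter _ hsub)) (hY y)
    obtain ⟨φ, hval, hprop⟩ := ih E' (Finset.erase_ssubset he0) hX' hY'
    -- degrees at the endpoints of e0 inside E' are < k
    have hk1 : 0 < k := by
      have h2 : e0 ∈ E.filter fun e => e.1 = e0.1 := Finset.mem_filter.2 ⟨he0, rfl⟩
      exact lt_of_lt_of_le (Finset.card_pos.2 ⟨e0, h2⟩) (hX e0.1)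
    have hdx : degX E' e0.1 < k := by
      have h1 : (E'.filter fun e => e.1 = e0.1) ⊆
          (E.filter fun e => e.1 = e0.1).erase e0 := by
        intro e he
        simp only [hE'def, Finset.mem_filter, Finset.mem_erase] at he ⊢
        tauto
      have h2 : e0 ∈ E.filter fun e => e.1 = e0.1 := Finset.mem_filter.2 ⟨he0, rfl⟩
      calc degX E' e0.1 ≤ _ := Finset.card_le_card h1
        _ = degX E e0.1 - 1 := Finset.card_erase_of_mem h2
        _ < k := by have := hX e0.1; have : 0 < degX E e0.1 := Finset.card_pos.2 ⟨e0, h2⟩; omega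
    have hdy : degY E' e0.2 < k := by
      have h1 : (E'.filter fun e => e.2 = e0.2) ⊆
          (E.filter fun e => e.2 = e0.2).erase e0 := by
        intro e he
        simp only [hE'def, Finset.mem_filter, Finset.mem_erase] at he ⊢
        tauto
      have h2 : e0 ∈ E.filter fun e => e.2 = e0.2 := Finset.mem_filter.2 ⟨he0, rfl⟩
      calc degY E' e0.2 ≤ _ := Finset.card_le_card h1
        _ = degY E e0.2 - 1 := Finset.card_erase_of_mem h2
        _ < k := by have := hY e0.2; have : 0 < degY E e0.2 := Finset.card_pos.2 ⟨e0, h2⟩; omega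
    -- free colors
    have hfree : ∀ (S : Finset (α × β)) (d : ℕ), S ⊆ E' → d < k → S.card ≤ d →
        ∃ c ∈ Finset.Icc 1 k, ∀ e ∈ S, φ e ≠ c := by
      intro S d hSE hdk hcard
      have hSsub : S.image φ ⊆ Finset.Icc 1 k := by
        intro c hc
        obtain ⟨e, he, rfl⟩ := Finset.mem_image.1 hc
        exact hval e (hSE he)
      have hScard : (S.image φ).card < k := by
        calc _ ≤ S.card := Finset.card_image_le
          _ ≤ d := hcard
          _ < k := hdk
      have hne : (Finset.Icc 1 k \ S.image φ).Nonempty := by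
        rw [← Finset.card_pos, Finset.card_sdiff_of_subset hSsub, Nat.card_Icc]
        omega
      obtain ⟨c, hc⟩ := hne
      rw [Finset.mem_sdiff] at hc
      exact ⟨c, hc.1, fun e he hφ => hc.2 (Finset.mem_image.2 ⟨e, he, hφ⟩)⟩
    obtain ⟨a, haI, hax'⟩ := hfree (E'.filter fun e => e.1 = e0.1) (degX E' e0.1)
      (Finset.filter_subset _ _) hdx le_rfl
    obtain ⟨b, hbI, hby'⟩ := hfree (E'.filter fun e => e.2 = e0.2) (degY E' e0.2)
      (Finset.filter_subset _ _) hdy le_rfl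
    have hax : ∀ e ∈ E', e.1 = e0.1 → φ e ≠ a :=
      fun e he h1 => hax' e (Finset.mem_filter.2 ⟨he, h1⟩)
    have hby : ∀ e ∈ E', e.2 = e0.2 → φ e ≠ b :=
      fun e he h1 => hby' e (Finset.mem_filter.2 ⟨he, h1⟩)
    -- main construction: get ψ proper on E' with a free at both endpoints of e0
    have key : ∃ ψ : α × β → ℕ, (∀ e ∈ E', ψ e ∈ Finset.Icc 1 k) ∧
        (∀ e ∈ E', ∀ e' ∈ E', e ≠ e' → (e.1 = e'.1 ∨ e.2 = e'.2) → ψ e ≠ ψ e') ∧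
        (∀ e ∈ E', e.1 = e0.1 → ψ e ≠ a) ∧ (∀ e ∈ E', e.2 = e0.2 → ψ e ≠ a) := by
      by_cases hay : ∀ e ∈ E', e.2 = e0.2 → φ e ≠ a
      · exact ⟨φ, fun e he => hval e he, hprop, hax, hay⟩
      · have hab : a ≠ b := by
          push_neg at hay
          obtain ⟨e, he, he2, hφ⟩ := hay
          intro h
          exact hby e he he2 (h ▸ hφ)
        obtain ⟨ψ, hψv, hψp, hψx, hψy⟩ := flip_lemma E' φ a b hab e0.1 e0.2 hprop hax hby
        refine ⟨ψ, fun e he => ?_, hψp, hψx, hψy⟩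
        rcases hψv e he with h | h | h
        · exact h ▸ hval e he
        · exact h ▸ haI
        · exact h ▸ hbI
    obtain ⟨ψ, hψv, hψp, hψx, hψy⟩ := key
    refine ⟨fun e => if e = e0 then a else ψ e, ?_, ?_⟩
    · intro e he
      by_cases h : e = e0
      · simp [h, haI]
      · simpa [h] using hψv e (Finset.mem_erase.2 ⟨h, he⟩)
    · intro e he e' he' hne hshare
      by_cases h : e = e0 <;> by_cases h' : e' = e0
      · exact absurd (h.trans h'.symm) hne
      · simp only [if_pos h, if_neg h']
        have he'' : e' ∈ E' := Finset.mem_erase.2 ⟨h', he'⟩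
        subst h
        rcases hshare with hs | hs
        · exact fun hc => hψx e' he'' hs.symm hc.symm
        · exact fun hc => hψy e' he'' hs.symm hc.symm
      · simp only [if_neg h, if_pos h']
        have he'' : e ∈ E' := Finset.mem_erase.2 ⟨h, he⟩
        subst h'
        rcases hshare with hs | hs
        · exact hψx e he'' hs
        · exact hψy e he'' hs
      · simp only [if_neg h, if_neg h']
        exact hψp e (Finset.mem_erase.2 ⟨h, he⟩) e' (Finset.mem_erase.2 ⟨h', he'⟩) hne hshare

lemma spectY_eq {α β : Type*} [DecidableEq β] (E : Finset (α × β))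
    (φ : α × β → ℕ)
    (hprop : ∀ e ∈ E, ∀ e' ∈ E, e ≠ e' → (e.1 = e'.1 ∨ e.2 = e'.2) → φ e ≠ φ e')
    (y : β) : (spectY E φ y).card = degY E y := by
  apply Finset.card_image_of_injOn
  intro e he e' he' hφ
  by_contra hne
  have he1 := Finset.mem_filter.1 he
  have he2 := Finset.mem_filter.1 he'
  exact hprop e he1.1 e' he2.1 hne (Or.inr (he1.2.trans he2.2.symm)) hφ

/-- For an `(l,k)`-biregular bipartite graph (`|X| = m`,
`|Y| = n`, `m ≥ n`, `ml = nk`), `w_Y(G) = k`: there is a proper edge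
`k`-coloring interval on `Y`, and none with fewer colors. -/
theorem stmt8 {α β : Type*} [Fintype α] [Fintype β] [DecidableEq α] [DecidableEq β]
    (E : Finset (α × β)) (m n l k : ℕ)
    (hm : 0 < m) (hn : 0 < n) (hl : 0 < l) (hk : 0 < k)
    (hcardX : Fintype.card α = m) (hcardY : Fintype.card β = n)
    (hdX : ∀ x : α, degX E x = l) (hdY : ∀ y : β, degY E y = k)
    (hnm : n ≤ m) (hml : m * l = n * k) :
    (∃ φ : α × β → ℕ, IsProperEdgeColoring E k φ ∧ IntervalOnY E φ) ∧
    (∀ t : ℕ, (∃ φ : α × β → ℕ, IsProperEdgeColoring E t φ ∧ IntervalOnY E φ) → k ≤ t) := by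
  have hlk : l ≤ k := by
    by_contra h
    push_neg at h
    have h1 : n * k ≤ m * k := Nat.mul_le_mul_right k hnm
    have h2 : m * k < m * l := by
      apply Nat.mul_lt_mul_of_le_of_lt (le_refl m) h hm
    omega
  have hbne : Nonempty β := Fintype.card_pos_iff.1 (by omega)
  obtain ⟨y1⟩ := hbne
  constructor
  · -- existence
    obtain ⟨φ, hval, hprop⟩ := exists_col k E (fun x => (hdX x).le.trans hlk)
      (fun y => (hdY y).le)
    -- spectrum of each y is exactly Icc 1 k
    have hspec : ∀ y : β, spectY E φ y = Finset.Icc 1 k := by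
      intro y
      apply Finset.eq_of_subset_of_card_le
      · intro c hc
        obtain ⟨e, he, rfl⟩ := Finset.mem_image.1 hc
        exact hval e (Finset.mem_filter.1 he).1
      · rw [Nat.card_Icc, spectY_eq E φ hprop y, hdY y]
        omega
    have hsurj : ∀ c ∈ Finset.Icc 1 k, ∃ e ∈ E, φ e = c := by
      intro c hc
      rw [← hspec y1] at hc
      obtain ⟨e, he, rfl⟩ := Finset.mem_image.1 hc
      exact ⟨e, (Finset.mem_filter.1 he).1, rfl⟩
    refine ⟨φ, ⟨hval, hsurj, hprop⟩, ?_⟩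
    intro y _
    rw [hspec y]
    constructor
    · exact ⟨1, Finset.mem_Icc.2 ⟨le_rfl, hk⟩⟩
    · intro p hp q hq c hpc hcq
      rw [Finset.mem_Icc] at *
      omega
  · -- lower bound
    rintro t ⟨φ, hφ, -⟩
    have h1 : spectY E φ y1 ⊆ Finset.Icc 1 t := by
      intro c hc
      obtain ⟨e, he, rfl⟩ := Finset.mem_image.1 hc
      exact hφ.1 e (Finset.mem_filter.1 he).1
    have h2 := Finset.card_le_card h1
    rw [spectY_eq E φ hφ.2.2 y1, hdY y1, Nat.card_Icc] at h2
    omega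
end

section
/- For the complete bipartite graph K_{m,n} with m ≥ n ≥ 1 and X the part of size m, w_X(K_{m,n}) = n · ⌈m/n⌉. -/
lemma mem_spectX_s11 {m n : ℕ} (φ : Fin m × Fin n → ℕ) (x : Fin m) (c : ℕ) :
    c ∈ spectX (Finset.univ : Finset (Fin m × Fin n)) φ x ↔ ∃ y : Fin n, φ (x, y) = c := by
  simp only [spectX, Finset.mem_image, Finset.mem_filter, Finset.mem_univ, true_and]
  constructor
  · rintro ⟨⟨a, b⟩, rfl, rfl⟩; exact ⟨b, rfl⟩
  · rintro ⟨y, hy⟩; exact ⟨(x, y), rfl, hy⟩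

lemma modkey (n x r : ℕ) (hn : 0 < n) (hr : r < n) :
    (x + (n + r - x % n) % n) % n = r := by
  have ha : x % n < n := Nat.mod_lt _ hn
  have e1 : x + (n + r - x % n) % n ≡ x % n + (n + r - x % n) [MOD n] :=
    Nat.ModEq.add ((Nat.mod_modEq x n).symm) (Nat.mod_modEq _ n)
  rw [show x % n + (n + r - x % n) = n + r by omega] at e1
  have : (x + (n + r - x % n) % n) % n = (n + r) % n := e1
  rw [this, Nat.add_mod_left, Nat.mod_eq_of_lt hr]

-- spectrum of construction

lemma spec_constr (m n : ℕ) (hn : 0 < n) (x : Fin m) :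
    spectX (Finset.univ : Finset (Fin m × Fin n))
      (fun e => (e.1.1 / n) * n + (e.1.1 + e.2.1) % n + 1) x
      = Finset.Icc ((x.1 / n) * n + 1) ((x.1 / n) * n + n) := by
  ext c
  rw [mem_spectX_s11, Finset.mem_Icc]
  constructor
  · rintro ⟨y, rfl⟩
    dsimp only
    have := Nat.mod_lt (x.1 + y.1) hn
    omega
  · rintro ⟨h1, h2⟩
    set r := c - (x.1 / n) * n - 1 with hr
    have hrn : r < n := by omega
    refine ⟨⟨(n + r - x.1 % n) % n, Nat.mod_lt _ hn⟩, ?_⟩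
    simp only
    rw [modkey n x.1 r hn hrn]
    omega

lemma divmod_unique (n a b p q : ℕ) (hn0 : 0 < n) (hp : p < n) (hq : q < n)
    (h : a * n + p = b * n + q) : a = b ∧ p = q := by
  have h1 : (p + a * n) / n = a := by
    rw [Nat.add_mul_div_right _ _ hn0, Nat.div_eq_of_lt hp, Nat.zero_add]
  have h2 : (q + b * n) / n = b := by
    rw [Nat.add_mul_div_right _ _ hn0, Nat.div_eq_of_lt hq, Nat.zero_add]
  have h3 : p + a * n = q + b * n := by omega
  have hab : a = b := by rw [← h1, h3, h2]
  refine ⟨hab, ?_⟩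
  subst hab
  omega

lemma part1' (m n k : ℕ) (hn0 : 0 < n) (hm : 0 < m)
    (hub : n * k ≤ m + n - 1) (hlb : m ≤ n * k) :
    ∃ φ : Fin m × Fin n → ℕ,
      IsProperEdgeColoring (Finset.univ : Finset (Fin m × Fin n)) (n * k) φ ∧
      IntervalOnX (Finset.univ : Finset (Fin m × Fin n)) φ := by
  have hnk : n * k = k * n := Nat.mul_comm n k
  refine ⟨fun e => (e.1.1 / n) * n + (e.1.1 + e.2.1) % n + 1, ⟨?_, ?_, ?_⟩, ?_⟩
  · -- colors in range
    rintro ⟨x, y⟩ -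
    dsimp only
    rw [Finset.mem_Icc]
    have hx : x.1 / n < k := by
      rw [Nat.div_lt_iff_lt_mul hn0]
      have := x.2
      omega
    have h2 : x.1 / n * n + n ≤ k * n := by
      calc x.1 / n * n + n = (x.1 / n + 1) * n := by ring
        _ ≤ k * n := Nat.mul_le_mul_right n hx
    have hm3 := Nat.mod_lt (x.1 + y.1) hn0
    omega
  · -- surjective
    intro c hc
    rw [Finset.mem_Icc] at hc
    have hdb := Nat.div_add_mod (c - 1) n
    have hmb := Nat.mod_lt (c - 1) hn0
    set b := (c - 1) / n with hb
    have hbn : n * b = b * n := Nat.mul_comm n b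
    have hbk : b < k := by
      by_contra h
      have : k * n ≤ b * n := Nat.mul_le_mul_right n (by omega)
      omega
    have hxm : b * n < m := by
      have h1 : (b + 1) * n ≤ k * n := Nat.mul_le_mul_right n hbk
      have h2 : (b + 1) * n = b * n + n := by ring
      omega
    have hmem : c ∈ spectX (Finset.univ : Finset (Fin m × Fin n))
        (fun e => (e.1.1 / n) * n + (e.1.1 + e.2.1) % n + 1) ⟨b * n, hxm⟩ := by
      rw [spec_constr m n hn0]
      have hq : (b * n) / n = b := Nat.mul_div_cancel b hn0
      rw [Finset.mem_Icc]
      simp only [Fin.val_mk, hq]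
      omega
    rw [mem_spectX_s11] at hmem
    obtain ⟨y, hy⟩ := hmem
    exact ⟨(⟨b * n, hxm⟩, y), Finset.mem_univ _, hy⟩
  · -- proper
    rintro ⟨x, y⟩ - ⟨x', y'⟩ - hne hshare heq
    dsimp only at heq hshare
    have hy := y.2
    have hy' := y'.2
    rcases hshare with h | h
    · -- same x
      have hx : x = x' := h
      subst hx
      have h1 : (x.1 + y.1) % n = (x.1 + y'.1) % n := by omega
      have h2 : y.1 % n = y'.1 % n := Nat.ModEq.add_left_cancel' x.1 h1
      rw [Nat.mod_eq_of_lt hy, Nat.mod_eq_of_lt hy'] at h2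
      exact hne (by ext <;> simp [h2])
    · -- same y
      have hyy : y = y' := h
      subst hyy
      have hm1 := Nat.mod_lt (x.1 + y.1) hn0
      have hm2 := Nat.mod_lt (x'.1 + y.1) hn0
      have heq2 : x.1 / n * n + (x.1 + y.1) % n = x'.1 / n * n + (x'.1 + y.1) % n := by
        omega
      obtain ⟨hdiv, hmod⟩ := divmod_unique n _ _ _ _ hn0 hm1 hm2 heq2
      have h2 : x.1 % n = x'.1 % n := Nat.ModEq.add_right_cancel' y.1 hmod
      have e1 := Nat.div_add_mod x.1 n
      have e2 := Nat.div_add_mod x'.1 n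
      have : x.1 = x'.1 := by
        have : n * (x.1 / n) = n * (x'.1 / n) := by rw [hdiv]
        omega
      exact hne (by ext <;> simp [this])
  · -- interval on X
    intro x _
    rw [spec_constr m n hn0]
    refine ⟨Finset.nonempty_Icc.2 (by omega), ?_⟩
    intro a ha b hb c h1 h2
    rw [Finset.mem_Icc] at *
    omega

lemma part2 (m n k t : ℕ) (hn0 : 0 < n) (hm : 0 < m)
    (hub : n * k ≤ m + n - 1) (hlb : m ≤ n * k)
    (φ : Fin m × Fin n → ℕ)
    (hp : IsProperEdgeColoring (Finset.univ : Finset (Fin m × Fin n)) t φ)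
    (hI : IntervalOnX (Finset.univ : Finset (Fin m × Fin n)) φ) : n * k ≤ t := by
  by_contra ht
  push_neg at ht
  obtain ⟨hc1, hc2, hc3⟩ := hp
  have hnk : n * k = k * n := Nat.mul_comm n k
  -- Step A : each spectrum has cardinality n
  have hcard : ∀ x : Fin m, (spectX (Finset.univ : Finset (Fin m × Fin n)) φ x).card = n := by
    intro x
    rw [spectX, Finset.card_image_of_injOn]
    · have hfe : (Finset.univ.filter fun e : Fin m × Fin n => e.1 = x)
          = {x} ×ˢ Finset.univ := by
        ext ⟨a, b⟩
        simp [Finset.mem_filter, Finset.mem_product, eq_comm]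
      rw [hfe, Finset.card_product, Finset.card_singleton, Finset.card_univ,
        Fintype.card_fin, one_mul]
    · intro e he e' he' hφ
      by_contra hne
      rw [Finset.coe_filter] at he he'
      simp only [Set.mem_setOf_eq, Finset.mem_univ, true_and] at he he'
      exact hc3 e (Finset.mem_univ e) e' (Finset.mem_univ e') hne
        (Or.inl (he.trans he'.symm)) hφ
  -- Step B/C : each spectrum is an interval [s, s+n-1] inside [1, t]
  have key : ∀ x : Fin m, ∃ s : ℕ, 1 ≤ s ∧ s + n - 1 ≤ t ∧
      spectX (Finset.univ : Finset (Fin m × Fin n)) φ x = Finset.Icc s (s + n - 1) := by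
    intro x
    have hne : (spectX (Finset.univ : Finset (Fin m × Fin n)) φ x).Nonempty := by
      rw [← Finset.card_pos, hcard]; exact hn0
    obtain ⟨-, hint⟩ := hI x hne
    set S := spectX (Finset.univ : Finset (Fin m × Fin n)) φ x with hSdef
    have hbound : ∀ c ∈ S, 1 ≤ c ∧ c ≤ t := by
      intro c hc
      rw [hSdef, spectX, Finset.mem_image] at hc
      obtain ⟨e, he, rfl⟩ := hc
      have := hc1 e (Finset.mem_univ e)
      rw [Finset.mem_Icc] at this
      exact this
    set a := S.min' hne with hadef
    set b := S.max' hne with hbdef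
    have hS : S = Finset.Icc a b := by
      apply Finset.Subset.antisymm
      · intro c hc
        rw [Finset.mem_Icc]
        exact ⟨Finset.min'_le S c hc, Finset.le_max' S c hc⟩
      · intro c hc
        rw [Finset.mem_Icc] at hc
        exact hint a (S.min'_mem hne) b (S.max'_mem hne) c hc.1 hc.2
    have hab : a ≤ b := Finset.min'_le S b (S.max'_mem hne)
    have hcards : b + 1 - a = n := by
      have := hcard x
      rw [← hSdef, hS, Nat.card_Icc] at this
      exact this
    have ha1 := hbound a (S.min'_mem hne)
    have hb1 := hbound b (S.max'_mem hne)
    refine ⟨a, ha1.1, by omega, ?_⟩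
    rw [hS]
    congr 1
    omega
  choose s hs1 hs2 hs3 using key
  -- f x = the index j with j*n ∈ spectrum of x
  set f : Fin m → ℕ := fun x => (s x + n - 1) / n with hfdef
  have hf : ∀ x : Fin m, f x ∈ Finset.Icc 1 (k - 1) ∧
      f x * n ∈ spectX (Finset.univ : Finset (Fin m × Fin n)) φ x := by
    intro x
    have hd := Nat.div_add_mod (s x + n - 1) n
    have hml := Nat.mod_lt (s x + n - 1) hn0
    have hfx : n * f x = n * ((s x + n - 1) / n) := rfl
    have hfl : s x ≤ n * f x := by omega
    have hfu : n * f x ≤ s x + n - 1 := by omega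
    have hf1 : 1 ≤ f x := by
      rcases Nat.eq_zero_or_pos (f x) with h | h
      · rw [h, Nat.mul_zero] at hfl
        have := hs1 x
        omega
      · exact h
    have hfk : f x < k := by
      apply Nat.lt_of_mul_lt_mul_left (a := n)
      have := hs2 x
      omega
    refine ⟨Finset.mem_Icc.2 ⟨hf1, by omega⟩, ?_⟩
    rw [hs3 x, Finset.mem_Icc, Nat.mul_comm (f x) n]
    exact ⟨hfl, hfu⟩
  have hY : ∀ x : Fin m, ∃ y : Fin n, φ (x, y) = f x * n := by
    intro x
    exact (mem_spectX_s11 φ x (f x * n)).1 (hf x).2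
  choose Y hYs using hY
  have hcount := Finset.card_eq_sum_card_fiberwise (s := Finset.univ) (t := Finset.Icc 1 (k - 1)) (f := f) (fun x _ => (hf x).1)
  rw [Finset.card_univ, Fintype.card_fin] at hcount
  have hfib : ∀ j ∈ Finset.Icc 1 (k - 1),
      (Finset.univ.filter fun x : Fin m => f x = j).card ≤ n := by
    intro j _
    have := Finset.card_le_card_of_injOn (f := Y)
      (s := Finset.univ.filter fun x : Fin m => f x = j)
      (t := (Finset.univ : Finset (Fin n)))
      (fun x _ => Finset.mem_univ _) ?_
    · rwa [Finset.card_univ, Fintype.card_fin] at this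
    · intro x1 h1 x2 h2 hy
      by_contra hne
      rw [Finset.coe_filter] at h1 h2
      simp only [Set.mem_setOf_eq, Finset.mem_univ, true_and] at h1 h2
      apply hc3 (x1, Y x1) (Finset.mem_univ _) (x2, Y x2) (Finset.mem_univ _)
        (by simp [hne]) (Or.inr hy)
      rw [hYs x1, hYs x2, h1, h2]
  have hsum : ∑ j ∈ Finset.Icc 1 (k - 1),
      (Finset.univ.filter fun x : Fin m => f x = j).card ≤ (k - 1) * n := by
    calc ∑ j ∈ Finset.Icc 1 (k - 1), (Finset.univ.filter fun x : Fin m => f x = j).card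
        ≤ ∑ _j ∈ Finset.Icc 1 (k - 1), n := Finset.sum_le_sum hfib
      _ = (Finset.Icc 1 (k - 1)).card * n := by rw [Finset.sum_const, smul_eq_mul]
      _ = (k - 1) * n := by
          rw [Nat.card_Icc, Nat.add_sub_cancel]
  have hk1 : 1 ≤ k := by
    rcases Nat.eq_zero_or_pos k with h | h
    · rw [h, Nat.mul_zero] at hlb; omega
    · exact h
  have hkn : (k - 1) * n + n = k * n := by
    have h1 : (k - 1 + 1) * n = (k - 1) * n + n := by ring
    rw [Nat.sub_add_cancel hk1] at h1
    omega
  omega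

/-- In `K_{m,n}` with `m ≥ n ≥ 1` and `X` the part of size `m`,
`w_X(K_{m,n}) = n·⌈m/n⌉`. -/
theorem stmt11 (m n : ℕ) (hn : 1 ≤ n) (hnm : n ≤ m) :
    (∃ φ : Fin m × Fin n → ℕ,
      IsProperEdgeColoring (Finset.univ : Finset (Fin m × Fin n)) (n * ((m + n - 1) / n)) φ ∧
      IntervalOnX (Finset.univ : Finset (Fin m × Fin n)) φ) ∧
    (∀ t : ℕ, (∃ φ : Fin m × Fin n → ℕ,
      IsProperEdgeColoring (Finset.univ : Finset (Fin m × Fin n)) t φ ∧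
      IntervalOnX (Finset.univ : Finset (Fin m × Fin n)) φ) → n * ((m + n - 1) / n) ≤ t) := by
  have hn0 : 0 < n := hn
  have hm : 0 < m := le_trans hn hnm
  have hdm := Nat.div_add_mod (m + n - 1) n
  have hml := Nat.mod_lt (m + n - 1) hn0
  have hub : n * ((m + n - 1) / n) ≤ m + n - 1 := by omega
  have hlb : m ≤ n * ((m + n - 1) / n) := by omega
  refine ⟨part1' m n _ hn0 hm hub hlb, ?_⟩
  rintro t ⟨ψ, hp, hI⟩
  exact part2 m n _ t hn0 hm hub hlb ψ hp hI
end

section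
/- For the complete bipartite graph K_{m,n} with m ≥ n ≥ 1 and X the part of size m, every proper edge t-coloring of K_{m,n} interval on X satisfies t ≥ n · ⌈m/n⌉. -/
/-- Arithmetic helper: the interval `[a, a+n-1]` (with `a ≥ 1`) contains the
multiple `n * ⌈a/n⌉` of `n`. -/
lemma aux_ceil (n a : ℕ) (hn : 0 < n) (ha : 1 ≤ a) :
    a ≤ n * ((a + n - 1) / n) ∧ n * ((a + n - 1) / n) ≤ a + n - 1 := by
  have h1 := Nat.div_add_mod (a + n - 1) n
  have h2 : (a + n - 1) % n < n := Nat.mod_lt _ hn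
  generalize n * ((a + n - 1) / n) = P at h1 ⊢
  generalize (a + n - 1) % n = r at h1 h2
  omega

/-- Arithmetic helper for the final step. -/
lemma aux_final (n m t : ℕ) (hn : 0 < n) (h : m ≤ n * (t / n)) :
    n * ((m + n - 1) / n) ≤ t := by
  have h1 : (m + n - 1) / n ≤ t / n := by
    have he : m + n - 1 = m + (n - 1) := by omega
    calc (m + n - 1) / n = (m + (n - 1)) / n := by rw [he]
      _ ≤ (n * (t / n) + (n - 1)) / n :=
          Nat.div_le_div_right (Nat.add_le_add_right h _)
      _ = t / n + (n - 1) / n := Nat.mul_add_div hn _ _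
      _ = t / n := by
          have hz : (n - 1) / n = 0 := Nat.div_eq_of_lt (by omega)
          rw [hz, Nat.add_zero]
  calc n * ((m + n - 1) / n) ≤ n * (t / n) := Nat.mul_le_mul_left _ h1
    _ ≤ t := Nat.mul_div_le t n

/-- In `K_{m,n}` with `m ≥ n ≥ 1` and `X` the part of size `m`,
every proper edge `t`-coloring interval on `X` satisfies `t ≥ n·⌈m/n⌉`. -/
theorem stmt12 (m n : ℕ) (hn : 1 ≤ n) (hnm : n ≤ m) :
    ∀ (t : ℕ) (φ : Fin m × Fin n → ℕ),
      IsProperEdgeColoring (Finset.univ : Finset (Fin m × Fin n)) t φ →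
      IntervalOnX (Finset.univ : Finset (Fin m × Fin n)) φ →
      n * ((m + n - 1) / n) ≤ t := by
  classical
  intro t φ hp hI
  obtain ⟨hbound, -, hproper⟩ := hp
  have hn0 : 0 < n := hn
  set E : Finset (Fin m × Fin n) := Finset.univ with hE
  -- spectrum as an image over Fin n
  have hspec : ∀ x : Fin m, spectX E φ x
      = (Finset.univ : Finset (Fin n)).image (fun y => φ (x, y)) := by
    intro x
    ext c
    simp only [spectX, Finset.mem_image, Finset.mem_filter, Finset.mem_univ, true_and, hE]
    constructor
    · rintro ⟨⟨a, b⟩, h1, h2⟩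
      exact ⟨b, by simp only [← h1]; exact h2⟩
    · rintro ⟨b, h⟩
      exact ⟨(x, b), rfl, h⟩
  -- each spectrum has exactly n colors
  have hcard : ∀ x, (spectX E φ x).card = n := by
    intro x
    rw [hspec x, Finset.card_image_of_injOn, Finset.card_univ, Fintype.card_fin]
    intro y _ y' _ h
    by_contra hne
    exact hproper (x, y) (Finset.mem_univ _) (x, y') (Finset.mem_univ _)
      (by simp [Prod.ext_iff, hne]) (Or.inl rfl) h
  have hne : ∀ x, (spectX E φ x).Nonempty := by
    intro x
    rw [← Finset.card_pos, hcard x]; exact hn0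
  -- spectra lie in [1, t]
  have hsub : ∀ x, ∀ c ∈ spectX E φ x, 1 ≤ c ∧ c ≤ t := by
    intro x c hc
    rw [hspec x] at hc
    obtain ⟨y, -, rfl⟩ := Finset.mem_image.mp hc
    have := hbound (x, y) (Finset.mem_univ _)
    exact Finset.mem_Icc.mp this
  -- membership in spectrum gives an incident edge of that color
  have hmemX : ∀ (x : Fin m) (c : ℕ), c ∈ spectX E φ x → ∃ y : Fin n, φ (x, y) = c := by
    intro x c hc
    rw [hspec x] at hc
    obtain ⟨y, -, h⟩ := Finset.mem_image.mp hc
    exact ⟨y, h⟩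
  -- at most n vertices of X contain a given color in their spectrum
  have hfib : ∀ c : ℕ,
      (Finset.univ.filter (fun x : Fin m => c ∈ spectX E φ x)).card ≤ n := by
    intro c
    have := Finset.card_le_card_of_injOn
      (f := fun x : Fin m =>
        if h : ∃ y : Fin n, φ (x, y) = c then h.choose else (⟨0, hn0⟩ : Fin n))
      (s := Finset.univ.filter (fun x : Fin m => c ∈ spectX E φ x))
      (t := (Finset.univ : Finset (Fin n)))
      (fun _ _ => Finset.mem_univ _) ?_
    · simpa using this
    · intro x hx x' hx' heq
      simp only [Finset.coe_filter, Set.mem_setOf_eq, Finset.mem_univ, true_and] at hx hx'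
      have hex := hmemX x c hx
      have hex' := hmemX x' c hx'
      dsimp only at heq
      rw [dif_pos hex, dif_pos hex'] at heq
      by_contra hxx
      exact hproper (x, hex.choose) (Finset.mem_univ _) (x', hex'.choose) (Finset.mem_univ _)
        (by simp [Prod.ext_iff, hxx]) (Or.inr heq)
        (by rw [hex.choose_spec, hex'.choose_spec])
  -- every spectrum contains a positive multiple n*k with k ≤ t/n
  have key : ∀ x : Fin m, ∃ k : ℕ, 1 ≤ k ∧ k ≤ t / n ∧ n * k ∈ spectX E φ x := by
    intro x
    set S := spectX E φ x with hS
    have hneS := hne x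
    set a := S.min' hneS with ha
    set b := S.max' hneS with hb
    have hSI : S = Finset.Icc a b := by
      ext c
      simp only [Finset.mem_Icc]
      constructor
      · intro hc; exact ⟨S.min'_le c hc, S.le_max' c hc⟩
      · rintro ⟨h1, h2⟩
        exact (hI x hneS).2 a (S.min'_mem hneS) b (S.max'_mem hneS) c h1 h2
    have hcardS : b + 1 - a = n := by
      rw [← Nat.card_Icc, ← hSI, hcard x]
    have hab : a ≤ b := S.min'_le b (S.max'_mem hneS)
    have ha1 : 1 ≤ a := (hsub x a (S.min'_mem hneS)).1
    have hbt : b ≤ t := (hsub x b (S.max'_mem hneS)).2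
    obtain ⟨h1, h2⟩ := aux_ceil n a hn0 ha1
    refine ⟨(a + n - 1) / n, ?_, ?_, ?_⟩
    · rcases Nat.eq_zero_or_pos ((a + n - 1) / n) with h0 | h0
      · rw [h0, Nat.mul_zero] at h1; omega
      · exact h0
    · rw [Nat.le_div_iff_mul_le hn0, Nat.mul_comm]
      calc n * ((a + n - 1) / n) ≤ a + n - 1 := h2
        _ = b := by omega
        _ ≤ t := hbt
    · rw [hSI, Finset.mem_Icc]
      exact ⟨h1, by omega⟩
  choose g hg1 hg2 hg3 using key
  -- counting argument
  have hcount : m ≤ n * (t / n) := by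
    have h1 : (Finset.univ : Finset (Fin m)).card
        ≤ n * ((Finset.univ.image g)).card := by
      apply Finset.card_le_mul_card_image
      intro k hk
      refine le_trans (Finset.card_le_card ?_) (hfib (n * k))
      intro x hx
      simp only [Finset.mem_filter, Finset.mem_univ, true_and] at hx ⊢
      rw [← hx]
      exact hg3 x
    have h2 : (Finset.univ.image g).card ≤ t / n := by
      have hsub2 : Finset.univ.image g ⊆ Finset.Icc 1 (t / n) := by
        intro k hk
        obtain ⟨x, -, rfl⟩ := Finset.mem_image.mp hk
        exact Finset.mem_Icc.mpr ⟨hg1 x, hg2 x⟩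
      calc (Finset.univ.image g).card ≤ (Finset.Icc 1 (t / n)).card :=
            Finset.card_le_card hsub2
        _ = t / n := by rw [Nat.card_Icc]; exact Nat.add_sub_cancel _ _
    calc m = (Finset.univ : Finset (Fin m)).card := by simp
      _ ≤ n * ((Finset.univ.image g)).card := h1
      _ ≤ n * (t / n) := Nat.mul_le_mul_left _ h2
  exact aux_final n m t hn0 hcount
end
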